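/- arXiv:math/0411340 — 7 statements merged into one kernel-verified Lean document; each statement's English description precedes it below -/
import Mathlib

section
/- Let char k = p > 0 and let f(u,v,w) = w^γ u^α − v^β ∈ k[u,v,w] with u = (u₁,…,u_k), all αᵢ > 0, and d := |α| ≥ 2. Let a be a point with u(a) = 0 and w_j(a) ≠ 0 for all j. If f is not a p-th power in k[u,v,w], then the equimultiple locus S_f(a) = {b : w(b) ≠ 0, μ_b(f) = d} is contained in {u = 0}. -/
open MvPolynomial

lemma aux_dvd_line {σ Fld : Type*} [CommRing Fld] (b : σ → Fld)
    (g : σ → Polynomial Fld) (hg : ∀ s, Polynomial.X ∣ (g s - Polynomial.C (b s)))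
    (n : ℕ) (F : MvPolynomial σ Fld)
    (hF : F ∈ (Ideal.span (Set.range fun s => X s - C (b s))) ^ n) :
    (Polynomial.X : Polynomial Fld) ^ n ∣ MvPolynomial.aeval g F := by
  have h1 : Ideal.map (MvPolynomial.aeval g).toRingHom
      (Ideal.span (Set.range fun s => X s - C (b s))) ≤ Ideal.span {Polynomial.X} := by
    rw [Ideal.map_span]
    apply Ideal.span_le.mpr
    rintro _ ⟨_, ⟨s, rfl⟩, rfl⟩
    simpa [Ideal.mem_span_singleton] using hg s
  have h2 := Ideal.mem_map_of_mem (MvPolynomial.aeval g).toRingHom hF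
  rw [Ideal.map_pow] at h2
  have h3 := Ideal.pow_right_mono h1 n h2
  rwa [Ideal.span_singleton_pow, Ideal.mem_span_singleton] at h3

lemma aux_p_dvd {Fld : Type*} [Field Fld] (p n : ℕ) [Fact p.Prime] [CharP Fld p]
    (r c c' : Fld) (hr : r ≠ 0) (hc : c ≠ 0)
    (h : (Polynomial.X : Polynomial Fld) ^ 2 ∣
      Polynomial.C r * (Polynomial.X + Polynomial.C c) ^ n - Polynomial.C c') :
    p ∣ n := by
  rw [Polynomial.X_pow_dvd_iff] at h
  have h1 := h 1 one_lt_two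
  rw [Polynomial.coeff_sub, Polynomial.coeff_C_mul, Polynomial.coeff_X_add_C_pow,
    Polynomial.coeff_C] at h1
  simp only [Nat.choose_one_right, if_neg one_ne_zero, sub_zero] at h1
  have h2 : (n : Fld) = 0 := by
    rcases mul_eq_zero.mp h1 with h | h
    · exact absurd h hr
    · rcases mul_eq_zero.mp h with h | h
      · exact absurd h (pow_ne_zero _ hc)
      · exact h
  exact (CharP.cast_eq_zero_iff Fld p n).mp h2

/-- Let `char k = p > 0`, `f = w^γ u^α - v^β ∈ k[u,v,w]` with all `αᵢ > 0`
and `d = |α| ≥ 2`. If `f` is not a `p`-th power, then every (closed) point `b` with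
`w(b) ≠ 0` at which `f` has order exactly `d` satisfies `u(b) = 0`; points are taken
with values in an arbitrary field extension `L` of `k` (residue field), and the order of
`f` at `b` is measured via powers of the maximal ideal of the point. -/
theorem equimultiple_locus_of_binomial_subset
    {k : Type*} [Field k] (p : ℕ) [Fact p.Prime] [CharP k p]
    (K L W : ℕ) (α : Fin K → ℕ) (β : Fin L → ℕ) (γ : Fin W → ℕ)
    (hα : ∀ i, 0 < α i) (d : ℕ) (hd : d = ∑ i, α i) (hd2 : 2 ≤ d)
    (f : MvPolynomial (Fin K ⊕ Fin L ⊕ Fin W) k)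
    (hf : f = (∏ j, X (Sum.inr (Sum.inr j)) ^ γ j) * (∏ i, X (Sum.inl i) ^ α i)
            - ∏ j, X (Sum.inr (Sum.inl j)) ^ β j)
    (hpow : ¬ ∃ g : MvPolynomial (Fin K ⊕ Fin L ⊕ Fin W) k, f = g ^ p) :
    ∀ (Fld : Type) (_ : Field Fld) (_ : Algebra k Fld)
      (bu : Fin K → Fld) (bv : Fin L → Fld) (bw : Fin W → Fld),
      (∀ j, bw j ≠ 0) →
      (MvPolynomial.map (algebraMap k Fld) f ∈
          (Ideal.span (Set.range fun s : Fin K ⊕ Fin L ⊕ Fin W =>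
            X s - C (Sum.elim bu (Sum.elim bv bw) s))) ^ d) →
      (MvPolynomial.map (algebraMap k Fld) f ∉
          (Ideal.span (Set.range fun s : Fin K ⊕ Fin L ⊕ Fin W =>
            X s - C (Sum.elim bu (Sum.elim bv bw) s))) ^ (d + 1)) →
      ∀ i, bu i = 0 := by
  classical
  intro Fld _ _ bu bv bw hw hmem _ i₀
  haveI : CharP Fld p := charP_of_injective_algebraMap (algebraMap k Fld).injective p
  by_contra hne
  set b : Fin K ⊕ Fin L ⊕ Fin W → Fld := Sum.elim bu (Sum.elim bv bw) with hb
  have hFcomp : ∀ g : (Fin K ⊕ Fin L ⊕ Fin W) → Polynomial Fld,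
      MvPolynomial.aeval g (MvPolynomial.map (algebraMap k Fld) f)
        = (∏ j, g (Sum.inr (Sum.inr j)) ^ γ j) * (∏ i, g (Sum.inl i) ^ α i)
          - ∏ j, g (Sum.inr (Sum.inl j)) ^ β j := by
    intro g
    rw [hf]
    simp [map_sub, map_mul, map_prod, map_pow]
  have hXdvdpow : ∀ m : ℕ, 1 ≤ m → (Polynomial.X : Polynomial Fld) ∣ Polynomial.X ^ m :=
    fun m hm => dvd_pow_self _ (by omega)
  have hcw : (∏ j, bw j ^ γ j) ≠ 0 :=
    Finset.prod_ne_zero_iff.mpr fun j _ => pow_ne_zero _ (hw j)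
  by_cases hZ : ∃ i, bu i = 0
  · -- Case A : some coordinate vanishes, contradict order ≥ d
    obtain ⟨i₁, hi₁⟩ := hZ
    set g1 : (Fin K ⊕ Fin L ⊕ Fin W) → Polynomial Fld :=
      Sum.elim (fun i => if bu i = 0 then Polynomial.X else Polynomial.C (bu i))
        (fun s => Polynomial.C (Sum.elim bv bw s)) with hg1def
    have hg1 : ∀ s, Polynomial.X ∣ (g1 s - Polynomial.C (b s)) := by
      rintro (i | s)
      · simp only [hg1def, Sum.elim_inl, hb]
        split
        · simp_all
        · simp
      · simp [hg1def, hb]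
    have hdvd := aux_dvd_line b g1 hg1 d _ hmem
    rw [hFcomp] at hdvd
    simp only [hg1def, Sum.elim_inl, Sum.elim_inr, ← Polynomial.C_pow, ← map_prod] at hdvd
    set P : Polynomial Fld :=
      ∏ i, (if bu i = 0 then Polynomial.X else Polynomial.C (bu i)) ^ α i with hP
    have hX1 := (hXdvdpow d (by omega)).trans hdvd
    have hP0 : P.coeff 0 = 0 := by
      rw [hP, Polynomial.coeff_zero_eq_eval_zero, Polynomial.eval_prod]
      refine Finset.prod_eq_zero (Finset.mem_univ i₁) ?_
      rw [if_pos hi₁]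
      simp [zero_pow (hα i₁).ne']
    have hcv0 : (∏ j, bv j ^ β j) = 0 := by
      rw [Polynomial.X_dvd_iff, Polynomial.coeff_sub, Polynomial.coeff_C_mul, hP0,
        mul_zero, Polynomial.coeff_C_zero, zero_sub, neg_eq_zero] at hX1
      exact hX1
    rw [hcv0, map_zero, sub_zero] at hdvd
    have hfacne : ∀ i : Fin K,
        ((if bu i = 0 then Polynomial.X else Polynomial.C (bu i)) : Polynomial Fld) ≠ 0 := by
      intro i
      split
      · exact Polynomial.X_ne_zero
      · simp_all
    have hPne : P ≠ 0 := by
      rw [hP]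
      exact Finset.prod_ne_zero_iff.mpr fun i _ => pow_ne_zero _ (hfacne i)
    have hqne : Polynomial.C (∏ j, bw j ^ γ j) * P ≠ 0 :=
      mul_ne_zero (Polynomial.C_ne_zero.mpr hcw) hPne
    have hdeg := Polynomial.natDegree_le_of_dvd hdvd hqne
    rw [Polynomial.natDegree_X_pow, Polynomial.natDegree_C_mul hcw, hP,
      Polynomial.natDegree_prod _ _ (fun i _ => pow_ne_zero _ (hfacne i))] at hdeg
    have hdegi : ∀ i : Fin K,
        ((if bu i = 0 then Polynomial.X else Polynomial.C (bu i)) ^ α i).natDegree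
          = if bu i = 0 then α i else 0 := by
      intro i
      split <;> simp [Polynomial.natDegree_pow]
    rw [Finset.sum_congr rfl fun i _ => hdegi i] at hdeg
    have hlt : (∑ i, if bu i = 0 then α i else 0) < d := by
      rw [hd]
      refine Finset.sum_lt_sum (fun i _ => by split <;> simp) ?_
      exact ⟨i₀, Finset.mem_univ _, by rw [if_neg hne]; exact hα i₀⟩
    omega
  · -- Case B : all bu i ≠ 0; derive that f is a p-th power
    push_neg at hZ
    have hcu : (∏ i, bu i ^ α i) ≠ 0 :=
      Finset.prod_ne_zero_iff.mpr fun i _ => pow_ne_zero _ (hZ i)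
    -- constant term
    have hg0 : ∀ s, Polynomial.X ∣
        ((fun s => Polynomial.C (b s)) s - Polynomial.C (b s)) := by simp
    have hdvd0 := aux_dvd_line b _ hg0 d _ hmem
    rw [hFcomp] at hdvd0
    simp only [hb, Sum.elim_inl, Sum.elim_inr, ← Polynomial.C_pow, ← map_prod, ← map_mul,
      ← map_sub] at hdvd0
    have hcvc : (∏ j, bw j ^ γ j) * (∏ i, bu i ^ α i) = ∏ j, bv j ^ β j := by
      have hX1 := (hXdvdpow d (by omega)).trans hdvd0
      rwa [Polynomial.X_dvd_iff, Polynomial.coeff_C_zero, sub_eq_zero] at hX1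
    have hcv : (∏ j, bv j ^ β j) ≠ 0 := hcvc ▸ mul_ne_zero hcw hcu
    -- p divides every α i
    have hαp : ∀ i, p ∣ α i := by
      intro i
      set g2 : (Fin K ⊕ Fin L ⊕ Fin W) → Polynomial Fld :=
        fun s => if s = Sum.inl i then Polynomial.X + Polynomial.C (bu i)
          else Polynomial.C (b s) with hg2def
      have hg2 : ∀ s, Polynomial.X ∣ (g2 s - Polynomial.C (b s)) := by
        intro s
        simp only [hg2def]
        split
        · next h => subst h; simp [hb]
        · simp
      have hdvd2 := (pow_dvd_pow (Polynomial.X : Polynomial Fld) hd2).trans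
        (aux_dvd_line b g2 hg2 d _ hmem)
      rw [hFcomp] at hdvd2
      have hsplit : (∏ i', g2 (Sum.inl i') ^ α i')
          = (Polynomial.X + Polynomial.C (bu i)) ^ α i
            * Polynomial.C (∏ i' ∈ Finset.univ.erase i, bu i' ^ α i') := by
        rw [← Finset.mul_prod_erase Finset.univ _ (Finset.mem_univ i)]
        simp only [hg2def, if_pos rfl]
        congr 1
        rw [map_prod]
        refine Finset.prod_congr rfl fun i' hi' => ?_
        rw [if_neg (fun h => (Finset.mem_erase.mp hi').1 (Sum.inl.inj h)), map_pow]
        rfl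
      have hrest : (∏ j, g2 (Sum.inr (Sum.inr j)) ^ γ j) = Polynomial.C (∏ j, bw j ^ γ j) := by
        rw [map_prod]
        refine Finset.prod_congr rfl fun j _ => ?_
        simp only [hg2def]
        rw [if_neg (by simp), map_pow]
        rfl
      have hrest2 : (∏ j, g2 (Sum.inr (Sum.inl j)) ^ β j) = Polynomial.C (∏ j, bv j ^ β j) := by
        rw [map_prod]
        refine Finset.prod_congr rfl fun j _ => ?_
        simp only [hg2def]
        rw [if_neg (by simp), map_pow]
        rfl
      rw [hsplit, hrest, hrest2] at hdvd2
      have hre : Polynomial.C (∏ j, bw j ^ γ j)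
            * ((Polynomial.X + Polynomial.C (bu i)) ^ α i
              * Polynomial.C (∏ i' ∈ Finset.univ.erase i, bu i' ^ α i'))
          = Polynomial.C ((∏ j, bw j ^ γ j) * ∏ i' ∈ Finset.univ.erase i, bu i' ^ α i')
            * (Polynomial.X + Polynomial.C (bu i)) ^ α i := by
        rw [map_mul]; ring
      rw [hre] at hdvd2
      exact aux_p_dvd p (α i) _ _ _
        (mul_ne_zero hcw (Finset.prod_ne_zero_iff.mpr fun i' _ => pow_ne_zero _ (hZ i')))
        (hZ i) hdvd2
    -- p divides every γ j
    have hγp : ∀ j, p ∣ γ j := by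
      intro j
      set g3 : (Fin K ⊕ Fin L ⊕ Fin W) → Polynomial Fld :=
        fun s => if s = Sum.inr (Sum.inr j) then Polynomial.X + Polynomial.C (bw j)
          else Polynomial.C (b s) with hg3def
      have hg3 : ∀ s, Polynomial.X ∣ (g3 s - Polynomial.C (b s)) := by
        intro s
        simp only [hg3def]
        split
        · next h => subst h; simp [hb]
        · simp
      have hdvd2 := (pow_dvd_pow (Polynomial.X : Polynomial Fld) hd2).trans
        (aux_dvd_line b g3 hg3 d _ hmem)
      rw [hFcomp] at hdvd2
      have hsplit : (∏ j', g3 (Sum.inr (Sum.inr j')) ^ γ j')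
          = (Polynomial.X + Polynomial.C (bw j)) ^ γ j
            * Polynomial.C (∏ j' ∈ Finset.univ.erase j, bw j' ^ γ j') := by
        rw [← Finset.mul_prod_erase Finset.univ _ (Finset.mem_univ j)]
        simp only [hg3def, if_pos rfl]
        congr 1
        rw [map_prod]
        refine Finset.prod_congr rfl fun j' hj' => ?_
        rw [if_neg (fun h => (Finset.mem_erase.mp hj').1
          (Sum.inr.inj (Sum.inr.inj h))), map_pow]
        rfl
      have hrest : (∏ i, g3 (Sum.inl i) ^ α i) = Polynomial.C (∏ i, bu i ^ α i) := by
        rw [map_prod]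
        refine Finset.prod_congr rfl fun i _ => ?_
        simp only [hg3def]
        rw [if_neg (by simp), map_pow]
        rfl
      have hrest2 : (∏ j', g3 (Sum.inr (Sum.inl j')) ^ β j')
          = Polynomial.C (∏ j', bv j' ^ β j') := by
        rw [map_prod]
        refine Finset.prod_congr rfl fun j' _ => ?_
        simp only [hg3def]
        rw [if_neg (by simp), map_pow]
        rfl
      rw [hsplit, hrest, hrest2] at hdvd2
      have hre : (Polynomial.X + Polynomial.C (bw j)) ^ γ j
            * Polynomial.C (∏ j' ∈ Finset.univ.erase j, bw j' ^ γ j')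
            * Polynomial.C (∏ i, bu i ^ α i)
          = Polynomial.C ((∏ j' ∈ Finset.univ.erase j, bw j' ^ γ j') * ∏ i, bu i ^ α i)
            * (Polynomial.X + Polynomial.C (bw j)) ^ γ j := by
        rw [map_mul]; ring
      rw [hre] at hdvd2
      exact aux_p_dvd p (γ j) _ _ _
        (mul_ne_zero (Finset.prod_ne_zero_iff.mpr fun j' _ => pow_ne_zero _ (hw j')) hcu)
        (hw j) hdvd2
    -- p divides every β j
    have hβp : ∀ j, p ∣ β j := by
      intro j
      by_cases hβj : β j = 0
      · simp [hβj]
      have hbvj : bv j ≠ 0 := by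
        have := Finset.prod_ne_zero_iff.mp hcv j (Finset.mem_univ j)
        exact fun h => this (by rw [h, zero_pow hβj])
      set g4 : (Fin K ⊕ Fin L ⊕ Fin W) → Polynomial Fld :=
        fun s => if s = Sum.inr (Sum.inl j) then Polynomial.X + Polynomial.C (bv j)
          else Polynomial.C (b s) with hg4def
      have hg4 : ∀ s, Polynomial.X ∣ (g4 s - Polynomial.C (b s)) := by
        intro s
        simp only [hg4def]
        split
        · next h => subst h; simp [hb]
        · simp
      have hdvd2 := (pow_dvd_pow (Polynomial.X : Polynomial Fld) hd2).trans
        (aux_dvd_line b g4 hg4 d _ hmem)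
      rw [hFcomp] at hdvd2
      have hsplit : (∏ j', g4 (Sum.inr (Sum.inl j')) ^ β j')
          = (Polynomial.X + Polynomial.C (bv j)) ^ β j
            * Polynomial.C (∏ j' ∈ Finset.univ.erase j, bv j' ^ β j') := by
        rw [← Finset.mul_prod_erase Finset.univ _ (Finset.mem_univ j)]
        simp only [hg4def, if_pos rfl]
        congr 1
        rw [map_prod]
        refine Finset.prod_congr rfl fun j' hj' => ?_
        rw [if_neg (fun h => (Finset.mem_erase.mp hj').1
          (Sum.inl.inj (Sum.inr.inj h))), map_pow]
        rfl
      have hrest : (∏ i, g4 (Sum.inl i) ^ α i) = Polynomial.C (∏ i, bu i ^ α i) := by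
        rw [map_prod]
        refine Finset.prod_congr rfl fun i _ => ?_
        simp only [hg4def]
        rw [if_neg (by simp), map_pow]
        rfl
      have hrest2 : (∏ j', g4 (Sum.inr (Sum.inr j')) ^ γ j')
          = Polynomial.C (∏ j', bw j' ^ γ j') := by
        rw [map_prod]
        refine Finset.prod_congr rfl fun j' _ => ?_
        simp only [hg4def]
        rw [if_neg (by simp), map_pow]
        rfl
      rw [hsplit, hrest, hrest2] at hdvd2
      have hdvd3 := (dvd_neg.mpr hdvd2)
      have hre : -(Polynomial.C (∏ j', bw j' ^ γ j') * Polynomial.C (∏ i, bu i ^ α i)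
            - (Polynomial.X + Polynomial.C (bv j)) ^ β j
              * Polynomial.C (∏ j' ∈ Finset.univ.erase j, bv j' ^ β j'))
          = Polynomial.C (∏ j' ∈ Finset.univ.erase j, bv j' ^ β j')
            * (Polynomial.X + Polynomial.C (bv j)) ^ β j
            - Polynomial.C ((∏ j', bw j' ^ γ j') * ∏ i, bu i ^ α i) := by
        rw [map_mul]; ring
      rw [hre] at hdvd3
      have hrv : (∏ j' ∈ Finset.univ.erase j, bv j' ^ β j') ≠ 0 :=
        Finset.prod_ne_zero_iff.mpr fun j' _ =>
          Finset.prod_ne_zero_iff.mp hcv j' (Finset.mem_univ j')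
      exact aux_p_dvd p (β j) _ _ _ hrv hbvj hdvd3
    -- conclude : f is a p-th power
    apply hpow
    refine ⟨(∏ j, X (Sum.inr (Sum.inr j)) ^ (γ j / p)) * (∏ i, X (Sum.inl i) ^ (α i / p))
      - ∏ j, X (Sum.inr (Sum.inl j)) ^ (β j / p), ?_⟩
    rw [hf, sub_pow_char, mul_pow, ← Finset.prod_pow, ← Finset.prod_pow, ← Finset.prod_pow]
    congr 1
    · congr 1
      · exact Finset.prod_congr rfl fun j _ => by
          rw [← pow_mul, Nat.div_mul_cancel (hγp j)]
      · exact Finset.prod_congr rfl fun i _ => by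
          rw [← pow_mul, Nat.div_mul_cancel (hαp i)]
    · exact Finset.prod_congr rfl fun j _ => by
        rw [← pow_mul, Nat.div_mul_cancel (hβp j)]
end

section
/- Under the hypotheses of the equimultiple locus theorem for a binomial f(u,v,w) = w^γ u^α − v^β that is not a p-th power and has d = |α| ≥ 2, the equimultiple locus equals exactly S_f(a) = {(u,v,w) : w ≠ 0, u = 0, μ_v(v^β) ≥ d}, i.e., the points with u = 0 where the monomial v^β vanishes to order at least d. -/
open MvPolynomial

namespace EqAux

variable {F : Type*} [Field F] {σ : Type*} {τ : Type*}

/-- total degree of a monomial exponent -/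
def mdeg (m : σ →₀ ℕ) : ℕ := m.sum fun _ e => e

lemma mdeg_add (m n : σ →₀ ℕ) : mdeg (m + n) = mdeg m + mdeg n := by
  classical exact Finsupp.sum_add_index (by simp) (by simp)

@[simp] lemma mdeg_single (s : σ) (e : ℕ) : mdeg (Finsupp.single s e) = e :=
  Finsupp.sum_single_index rfl

@[simp] lemma mdeg_zero : mdeg (0 : σ →₀ ℕ) = 0 := rfl

lemma mdeg_finset_sum (t : Finset τ) (g : τ → (σ →₀ ℕ)) :
    mdeg (∑ j ∈ t, g j) = ∑ j ∈ t, mdeg (g j) := by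
  classical
  induction t using Finset.cons_induction with
  | empty => simp
  | cons a s ha ih => simp [Finset.sum_insert ha, mdeg_add, ih]

lemma mem_span_X_deg {g : MvPolynomial σ F}
    (hg : g ∈ Ideal.span (Set.range (X (R := F) (σ := σ)))) :
    ∀ m ∈ g.support, 1 ≤ mdeg m := by
  classical
  refine Submodule.span_induction ?_ ?_ ?_ ?_ hg
  · rintro x ⟨s, rfl⟩ m hm
    rw [support_X] at hm
    simp only [Finset.mem_singleton] at hm
    subst hm; simp
  · intro m hm; simp at hm
  · intro x y _ _ hx hy m hm
    rcases Finset.mem_union.1 (Finsupp.support_add hm) with h | h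
    exacts [hx m h, hy m h]
  · intro r x _ hx m hm
    rw [smul_eq_mul] at hm
    have := support_mul r x hm
    rcases Finset.mem_add.1 this with ⟨m1, _, m2, h2, rfl⟩
    have := hx m2 h2
    rw [mdeg_add]; omega

lemma deg_ge_of_mem_pow {n : ℕ} {g : MvPolynomial σ F}
    (hg : g ∈ (Ideal.span (Set.range (X (R := F) (σ := σ)))) ^ n) :
    ∀ m ∈ g.support, n ≤ mdeg m := by
  classical
  induction n generalizing g with
  | zero => intro m _; exact Nat.zero_le _
  | succ n ih =>
    rw [pow_succ] at hg
    refine Submodule.mul_induction_on hg ?_ ?_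
    · intro x hx y hy m hm
      rcases Finset.mem_add.1 (support_mul x y hm) with ⟨m1, h1, m2, h2, rfl⟩
      have h3 := ih hx m1 h1
      have h4 := mem_span_X_deg hy m2 h2
      rw [mdeg_add]; omega
    · intro x y hx hy m hm
      rcases Finset.mem_union.1 (Finsupp.support_add hm) with h | h
      exacts [hx m h, hy m h]

lemma prod_X_pow_mem (t : Finset τ) (v : τ → σ) (e : τ → ℕ) :
    (∏ j ∈ t, X (v j) ^ e j : MvPolynomial σ F) ∈
      (Ideal.span (Set.range (X (R := F) (σ := σ)))) ^ (∑ j ∈ t, e j) := by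
  classical
  induction t using Finset.cons_induction with
  | empty => simp [Ideal.one_eq_top]
  | cons a s ha ih =>
    rw [Finset.prod_cons, Finset.sum_cons, pow_add]
    have hXa : (X (v a) : MvPolynomial σ F) ∈ Ideal.span (Set.range X) :=
      Ideal.subset_span ⟨v a, rfl⟩
    exact Ideal.mul_mem_mul (Ideal.pow_mem_pow hXa _) ih

lemma vars_binom_prod [DecidableEq σ] [DecidableEq τ] (t : Finset τ) (v : τ → σ) (c : τ → F)
    (e : τ → ℕ) :
    (∏ j ∈ t, (X (v j) + C (c j)) ^ e j : MvPolynomial σ F).vars ⊆ t.image v := by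
  refine (vars_prod _).trans ?_
  intro s hs
  rcases Finset.mem_biUnion.1 hs with ⟨j, hj, hsj⟩
  have h1 : s ∈ ((X (v j) + C (c j)) : MvPolynomial σ F).vars :=
    vars_pow _ _ hsj
  have h2 := vars_add_subset (X (v j) : MvPolynomial σ F) (C (c j)) h1
  rw [vars_X, vars_C] at h2
  simp only [Finset.union_empty, Finset.mem_singleton] at h2
  subst h2
  exact Finset.mem_image_of_mem v hj

lemma coeff_eq_zero_of_not_mem_vars {p : MvPolynomial σ F} {m : σ →₀ ℕ} {s : σ}
    (h : s ∉ p.vars) (hm : m s ≠ 0) : coeff m p = 0 := by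
  by_contra hc
  exact h ((mem_vars s).2 ⟨m, mem_support_iff.2 hc, Finsupp.mem_support_iff.2 hm⟩)

lemma not_mem_vars_binom_prod [DecidableEq σ] [DecidableEq τ] (t : Finset τ) (v : τ → σ)
    (c : τ → F) (e : τ → ℕ) {s : σ} (hs : ∀ j ∈ t, v j ≠ s) :
    s ∉ (∏ j ∈ t, (X (v j) + C (c j)) ^ e j : MvPolynomial σ F).vars := by
  intro h
  rcases Finset.mem_image.1 (vars_binom_prod t v c e h) with ⟨j, hj, hvj⟩
  exact hs j hj hvj

lemma constantCoeff_binom_prod (t : Finset τ) (v : τ → σ) (c : τ → F) (e : τ → ℕ) :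
    constantCoeff (∏ j ∈ t, (X (v j) + C (c j)) ^ e j : MvPolynomial σ F)
      = ∏ j ∈ t, c j ^ e j := by
  rw [map_prod]
  refine Finset.prod_congr rfl fun j _ => ?_
  simp

lemma prod_X_pow_eq_monomial' (t : Finset τ) (v : τ → σ) (e : τ → ℕ) :
    (∏ j ∈ t, X (v j) ^ e j : MvPolynomial σ F)
      = monomial (∑ j ∈ t, Finsupp.single (v j) (e j)) 1 := by
  classical
  induction t using Finset.cons_induction with
  | empty => simp
  | cons a s ha ih =>
    rw [Finset.prod_cons, Finset.sum_cons, ih, X_pow_eq_monomial, monomial_mul, one_mul]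

lemma coeff_binom_prod_top [DecidableEq τ] (t : Finset τ) (v : τ → σ) (c : τ → F) (e : τ → ℕ)
    [DecidablePred fun j => c j = 0] :
    coeff (∑ j ∈ t.filter (fun j => c j = 0), Finsupp.single (v j) (e j))
        (∏ j ∈ t, (X (v j) + C (c j)) ^ e j : MvPolynomial σ F)
      = ∏ j ∈ t.filter (fun j => ¬ c j = 0), c j ^ e j := by
  classical
  rw [← Finset.prod_filter_mul_prod_filter_not t (fun j => c j = 0)]
  have h1 : (∏ j ∈ t.filter (fun j => c j = 0), (X (v j) + C (c j)) ^ e j : MvPolynomial σ F)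
      = monomial (∑ j ∈ t.filter (fun j => c j = 0), Finsupp.single (v j) (e j)) 1 := by
    rw [← prod_X_pow_eq_monomial']
    refine Finset.prod_congr rfl fun j hj => ?_
    rw [(Finset.mem_filter.1 hj).2]
    simp
  rw [h1]
  have h2 := coeff_monomial_mul (0 : σ →₀ ℕ)
      (∑ j ∈ t.filter (fun j => c j = 0), Finsupp.single (v j) (e j)) (1 : F)
      (∏ j ∈ t.filter (fun j => ¬ c j = 0), (X (v j) + C (c j)) ^ e j : MvPolynomial σ F)
  rw [add_zero, one_mul] at h2
  rw [h2]
  exact constantCoeff_binom_prod _ _ _ _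

lemma coeff_single_one_binom_pow_mul {s : σ} (a : F) (n : ℕ) {Q : MvPolynomial σ F}
    (hQv : s ∉ Q.vars) :
    coeff (Finsupp.single s 1) ((X s + C a) ^ n * Q)
      = (n : F) * a ^ (n - 1) * constantCoeff Q := by
  classical
  have hQ0 : coeff (Finsupp.single s 1) Q = 0 :=
    coeff_eq_zero_of_not_mem_vars hQv (by simp)
  have hterm : ∀ k, (X s ^ k * C a ^ (n - k) * ((n.choose k : ℕ) : MvPolynomial σ F))
      = monomial (Finsupp.single s k) (a ^ (n - k) * ((n.choose k : ℕ) : F)) := by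
    intro k
    have h1 : ((n.choose k : ℕ) : MvPolynomial σ F) = C ((n.choose k : ℕ) : F) := by simp
    rw [h1, ← C_mul_X_pow_eq_monomial, map_mul, map_pow]
    ring
  rw [add_pow, Finset.sum_mul, coeff_sum]
  have hsummand : ∀ k, coeff (Finsupp.single s 1)
        ((X s ^ k * C a ^ (n - k) * ((n.choose k : ℕ) : MvPolynomial σ F)) * Q)
      = if Finsupp.single s k ≤ Finsupp.single s 1 then
          (a ^ (n - k) * ((n.choose k : ℕ) : F)) *
            coeff (Finsupp.single s 1 - Finsupp.single s k) Q
        else 0 := by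
    intro k
    rw [hterm k, coeff_monomial_mul']
  simp only [hsummand]
  by_cases hn0 : n = 0
  · subst hn0
    simp [hQ0]
  · rw [Finset.sum_eq_single 1]
    · rw [if_pos (le_refl _), tsub_self]
      have h3 : coeff 0 Q = constantCoeff Q := rfl
      rw [h3, Nat.choose_one_right]
      ring
    · intro k _ hk1
      rcases Nat.lt_or_ge k 1 with hk | hk
      · interval_cases k
        rw [if_pos]
        · simp [hQ0]
        · simp
      · have hk2 : 2 ≤ k := by omega
        rw [if_neg]
        rw [Finsupp.single_le_iff]
        simp only [Finsupp.single_eq_same]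
        omega
    · intro h1
      exact absurd (Finset.mem_range.2 (by omega)) h1

lemma sum_single_apply [DecidableEq σ] [DecidableEq τ] (t : Finset τ) (v : τ → σ)
    (hv : Function.Injective v) (e : τ → ℕ) {j₀ : τ} (hj₀ : j₀ ∈ t) :
    (∑ j ∈ t, Finsupp.single (v j) (e j)) (v j₀) = e j₀ := by
  rw [Finsupp.finset_sum_apply]
  rw [Finset.sum_eq_single j₀]
  · simp
  · intro j _ hj
    rw [Finsupp.single_apply, if_neg (fun h => hj (hv h))]
  · intro h
    exact absurd hj₀ h

/-- Translation automorphism `X s ↦ X s - C (c s)`. -/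
noncomputable def shiftEquiv (c : σ → F) : MvPolynomial σ F ≃ₐ[F] MvPolynomial σ F :=
  AlgEquiv.ofAlgHom (aeval fun s => X s - C (c s)) (aeval fun s => X s + C (c s))
    (by
      rw [comp_aeval]
      refine algHom_ext fun s => ?_
      simp [algebraMap_eq])
    (by
      rw [comp_aeval]
      refine algHom_ext fun s => ?_
      simp [algebraMap_eq])

@[simp] lemma shiftEquiv_apply (c : σ → F) (x : MvPolynomial σ F) :
    shiftEquiv c x = aeval (fun s => X s - C (c s)) x := rfl

@[simp] lemma shiftEquiv_symm_apply (c : σ → F) (x : MvPolynomial σ F) :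
    (shiftEquiv c).symm x = aeval (fun s => X s + C (c s)) x := rfl

lemma mem_span_pow_iff (c : σ → F) (x : MvPolynomial σ F) (n : ℕ) :
    x ∈ (Ideal.span (Set.range fun s => X s - C (c s))) ^ n ↔
      aeval (fun s => X s + C (c s)) x ∈
        (Ideal.span (Set.range (X (R := F) (σ := σ)))) ^ n := by
  have hmap : Ideal.map (shiftEquiv c) (Ideal.span (Set.range (X (R := F) (σ := σ))))
      = Ideal.span (Set.range fun s => X s - C (c s)) := by
    rw [Ideal.map_span]
    congr 1
    rw [← Set.range_comp]
    refine congrArg _ (funext fun s => ?_)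
    simp
  rw [← hmap, ← Ideal.map_pow]
  rw [Ideal.mem_map_of_equiv (shiftEquiv c)]
  constructor
  · rintro ⟨y, hy, rfl⟩
    have h1 : (shiftEquiv c).symm (shiftEquiv c y) = y := AlgEquiv.symm_apply_apply _ _
    rw [← shiftEquiv_symm_apply, h1]
    exact hy
  · intro h
    refine ⟨(shiftEquiv c).symm x, by rw [← shiftEquiv_symm_apply] at h; exact h, ?_⟩
    exact AlgEquiv.apply_symm_apply _ _

lemma not_all_dvd {k : Type*} [Field k] (p : ℕ) [Fact p.Prime] [CharP k p]
    {K L W : ℕ} (α : Fin K → ℕ) (β : Fin L → ℕ) (γ : Fin W → ℕ)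
    {f : MvPolynomial (Fin K ⊕ Fin L ⊕ Fin W) k}
    (hf : f = (∏ j, X (Sum.inr (Sum.inr j)) ^ γ j) * (∏ i, X (Sum.inl i) ^ α i)
            - ∏ j, X (Sum.inr (Sum.inl j)) ^ β j)
    (hpow : ¬ ∃ g : MvPolynomial (Fin K ⊕ Fin L ⊕ Fin W) k, f = g ^ p) :
    (∃ i, ¬ p ∣ α i) ∨ (∃ j, ¬ p ∣ β j) ∨ (∃ j, ¬ p ∣ γ j) := by
  by_contra h
  push_neg at h
  obtain ⟨h1, h2, h3⟩ := h
  refine hpow ⟨(∏ j, X (Sum.inr (Sum.inr j)) ^ (γ j / p)) * (∏ i, X (Sum.inl i) ^ (α i / p))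
      - ∏ j, X (Sum.inr (Sum.inl j)) ^ (β j / p), ?_⟩
  rw [hf, sub_pow_char, mul_pow, ← Finset.prod_pow, ← Finset.prod_pow, ← Finset.prod_pow]
  congr 1
  · congr 1
    · refine Finset.prod_congr rfl fun x _ => ?_
      rw [← pow_mul, Nat.div_mul_cancel (h3 x)]
    · refine Finset.prod_congr rfl fun x _ => ?_
      rw [← pow_mul, Nat.div_mul_cancel (h1 x)]
  · refine Finset.prod_congr rfl fun x _ => ?_
    rw [← pow_mul, Nat.div_mul_cancel (h2 x)]

end EqAux

open EqAux

/-- Under the hypotheses of the equimultiple locus theorem for a binomial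
`f = w^γ u^α - v^β` that is not a `p`-th power, with `d = |α| ≥ 2`, the equimultiple locus
is exactly `{ b : w(b) ≠ 0, u(b) = 0, μ_v(v^β) ≥ d }`, where `μ_v(v^β)` at `b` is the sum
of the `β_j` over the indices `j` with `v_j(b) = 0`. -/
theorem equimultiple_locus_of_binomial_eq
    {k : Type*} [Field k] (p : ℕ) [Fact p.Prime] [CharP k p]
    (K L W : ℕ) (α : Fin K → ℕ) (β : Fin L → ℕ) (γ : Fin W → ℕ)
    (hα : ∀ i, 0 < α i) (d : ℕ) (hd : d = ∑ i, α i) (hd2 : 2 ≤ d)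
    (f : MvPolynomial (Fin K ⊕ Fin L ⊕ Fin W) k)
    (hf : f = (∏ j, X (Sum.inr (Sum.inr j)) ^ γ j) * (∏ i, X (Sum.inl i) ^ α i)
            - ∏ j, X (Sum.inr (Sum.inl j)) ^ β j)
    (hpow : ¬ ∃ g : MvPolynomial (Fin K ⊕ Fin L ⊕ Fin W) k, f = g ^ p) :
    ∀ (Fld : Type) (_ : Field Fld) (_ : Algebra k Fld) (_ : DecidableEq Fld)
      (bu : Fin K → Fld) (bv : Fin L → Fld) (bw : Fin W → Fld),
      (∀ j, bw j ≠ 0) →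
      ((MvPolynomial.map (algebraMap k Fld) f ∈
          (Ideal.span (Set.range fun s : Fin K ⊕ Fin L ⊕ Fin W =>
            X s - C (Sum.elim bu (Sum.elim bv bw) s))) ^ d ∧
        MvPolynomial.map (algebraMap k Fld) f ∉
          (Ideal.span (Set.range fun s : Fin K ⊕ Fin L ⊕ Fin W =>
            X s - C (Sum.elim bu (Sum.elim bv bw) s))) ^ (d + 1))
        ↔ ((∀ i, bu i = 0) ∧ d ≤ ∑ j ∈ Finset.univ.filter (fun j => bv j = 0), β j)) := by
  intro Fld fFld fAlg fDec bu bv bw hbw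
  letI := fFld
  letI := fAlg
  haveI : CharP Fld p := charP_of_injective_algebraMap (algebraMap k Fld).injective p
  classical
  -- notation
  set c : (Fin K ⊕ Fin L ⊕ Fin W) → Fld := Sum.elim bu (Sum.elim bv bw) with hc
  set fF : MvPolynomial (Fin K ⊕ Fin L ⊕ Fin W) Fld := MvPolynomial.map (algebraMap k Fld) f with hfF
  set G : MvPolynomial (Fin K ⊕ Fin L ⊕ Fin W) Fld := aeval (fun s => X s + C (c s)) fF with hG
  set I0 : Ideal (MvPolynomial (Fin K ⊕ Fin L ⊕ Fin W) Fld) := Ideal.span (Set.range X) with hI0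
  have hmem : ∀ n, (fF ∈ (Ideal.span (Set.range fun s : (Fin K ⊕ Fin L ⊕ Fin W) => X s - C (c s))) ^ n
      ↔ G ∈ I0 ^ n) := fun n => mem_span_pow_iff c fF n
  -- the A-side data
  set vA : Fin K ⊕ Fin W → (Fin K ⊕ Fin L ⊕ Fin W) := Sum.elim Sum.inl (Sum.inr ∘ Sum.inr) with hvA
  set cA : Fin K ⊕ Fin W → Fld := Sum.elim bu bw with hcA
  set eA : Fin K ⊕ Fin W → ℕ := Sum.elim α γ with heA
  have hvA_inj : Function.Injective vA := by
    rintro (a | a) (b | b) h <;>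
      simp only [hvA, Sum.elim_inl, Sum.elim_inr, Function.comp_apply, Sum.inl.injEq,
        Sum.inr.injEq, reduceCtorEq] at h <;> simp [h]
  have hvV_inj : Function.Injective (fun j : Fin L => (Sum.inr (Sum.inl j) : (Fin K ⊕ Fin L ⊕ Fin W))) := by
    intro x y h
    simpa using h
  set Aprod : MvPolynomial (Fin K ⊕ Fin L ⊕ Fin W) Fld := ∏ x : Fin K ⊕ Fin W, (X (vA x) + C (cA x)) ^ eA x
    with hAprod
  set Vprod : MvPolynomial (Fin K ⊕ Fin L ⊕ Fin W) Fld :=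
    ∏ j : Fin L, (X (Sum.inr (Sum.inl j) : (Fin K ⊕ Fin L ⊕ Fin W)) + C (bv j)) ^ β j with hVprod
  have hGeq : G = Aprod - Vprod := by
    rw [hG, hfF, hf]
    simp only [map_sub, map_mul, map_prod, map_pow, MvPolynomial.map_X, aeval_X]
    rw [hAprod, Fintype.prod_sum_type]
    simp only [hvA, hcA, heA, hc, Sum.elim_inl, Sum.elim_inr, Function.comp_apply]
    ring
  have hcoeffG : ∀ m : (Fin K ⊕ Fin L ⊕ Fin W) →₀ ℕ, coeff m G = coeff m Aprod - coeff m Vprod := by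
    intro m; rw [hGeq, coeff_sub]
  have hlow : ∀ {n : ℕ} {m : (Fin K ⊕ Fin L ⊕ Fin W) →₀ ℕ}, G ∈ I0 ^ n → coeff m G ≠ 0 → n ≤ mdeg m :=
    fun hGn hcm => deg_ge_of_mem_pow hGn _ (mem_support_iff.2 hcm)
  -- abbreviations
  set μ : ℕ := ∑ j ∈ Finset.univ.filter (fun j => bv j = 0), β j with hμdef
  have hK : 0 < K := by
    by_contra hK
    have : K = 0 := by omega
    subst this
    simp at hd
    omega
  set i₀ : Fin K := ⟨0, hK⟩ with hi₀
  -- the A-side top monomial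
  set MA : (Fin K ⊕ Fin L ⊕ Fin W) →₀ ℕ := ∑ i ∈ Finset.univ.filter (fun i => bu i = 0),
    Finsupp.single (Sum.inl i : (Fin K ⊕ Fin L ⊕ Fin W)) (α i) with hMA
  have hMAfilter : (∑ x ∈ Finset.univ.filter (fun x => cA x = 0),
      Finsupp.single (vA x) (eA x)) = MA := by
    rw [hMA, Finset.sum_filter, Finset.sum_filter, Fintype.sum_sum_type]
    simp [hvA, hcA, heA, hbw]
  have hcoeffMA_A : coeff MA Aprod
      = (∏ i ∈ Finset.univ.filter (fun i => ¬ bu i = 0), bu i ^ α i) *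
        ∏ j, bw j ^ γ j := by
    rw [← hMAfilter, hAprod, coeff_binom_prod_top]
    rw [Finset.prod_filter, Fintype.prod_sum_type, ← Finset.prod_filter]
    simp [hvA, hcA, heA, hbw]
  have hcoeffMA_A_ne : coeff MA Aprod ≠ 0 := by
    rw [hcoeffMA_A]
    refine mul_ne_zero ?_ ?_
    · rw [Finset.prod_ne_zero_iff]
      intro i hi
      exact pow_ne_zero _ (Finset.mem_filter.1 hi).2
    · rw [Finset.prod_ne_zero_iff]
      intro j _
      exact pow_ne_zero _ (hbw j)
  have hmdegMA : mdeg MA = ∑ i ∈ Finset.univ.filter (fun i => bu i = 0), α i := by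
    rw [hMA, mdeg_finset_sum]
    simp
  -- the V-side top monomial
  set MV : (Fin K ⊕ Fin L ⊕ Fin W) →₀ ℕ := ∑ j ∈ Finset.univ.filter (fun j => bv j = 0),
    Finsupp.single (Sum.inr (Sum.inl j) : (Fin K ⊕ Fin L ⊕ Fin W)) (β j) with hMV
  have hcoeffMV_V : coeff MV Vprod
      = ∏ j ∈ Finset.univ.filter (fun j => ¬ bv j = 0), bv j ^ β j := by
    rw [hMV, hVprod]
    exact coeff_binom_prod_top Finset.univ (fun j => (Sum.inr (Sum.inl j) : (Fin K ⊕ Fin L ⊕ Fin W))) bv β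
  have hcoeffMV_V_ne : coeff MV Vprod ≠ 0 := by
    rw [hcoeffMV_V, Finset.prod_ne_zero_iff]
    intro j hj
    exact pow_ne_zero _ (Finset.mem_filter.1 hj).2
  have hmdegMV : mdeg MV = μ := by
    rw [hMV, mdeg_finset_sum]
    simp [hμdef]
  -- vars of the two sides
  have hvarsA : ∀ (j : Fin L), (Sum.inr (Sum.inl j) : (Fin K ⊕ Fin L ⊕ Fin W)) ∉ Aprod.vars := by
    intro j
    rw [hAprod]
    refine not_mem_vars_binom_prod _ _ _ _ ?_
    rintro (x | x) _ h <;> simp [hvA] at h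
  have hvarsV : ∀ (x : Fin K ⊕ Fin W), vA x ∉ Vprod.vars := by
    intro x
    rw [hVprod]
    refine not_mem_vars_binom_prod _ _ _ _ ?_
    intro j _ h
    cases x <;> simp [hvA] at h
  -- constant coefficients
  have hccA : constantCoeff Aprod = (∏ i, bu i ^ α i) * ∏ j, bw j ^ γ j := by
    rw [hAprod, constantCoeff_binom_prod, Fintype.prod_sum_type]
    simp [hcA, heA]
  have hccV : constantCoeff Vprod = ∏ j, bv j ^ β j := by
    rw [hVprod, constantCoeff_binom_prod]
  constructor
  · -- forward: membership data implies the locus description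
    rintro ⟨h1, h2⟩
    rw [hmem d] at h1
    rw [hmem (d + 1)] at h2
    -- first claim: all bu i = 0
    have hbu : ∀ i, bu i = 0 := by
      by_contra hbu
      push_neg at hbu
      obtain ⟨i₁, hi₁⟩ := hbu
      -- e1 < d
      have he1d : (∑ i ∈ Finset.univ.filter (fun i => bu i = 0), α i) < d := by
        have hsplit := Finset.sum_filter_add_sum_filter_not Finset.univ
          (fun i => bu i = 0) α
        have hi₁mem : i₁ ∈ Finset.univ.filter (fun i => ¬ bu i = 0) := by
          simp [hi₁]
        have hle := Finset.single_le_sum (f := α) (fun i _ => Nat.zero_le _) hi₁mem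
        have := hα i₁
        omega
      by_cases he1 : (∑ i ∈ Finset.univ.filter (fun i => bu i = 0), α i) = 0
      · -- all bu i ≠ 0
        have hbune : ∀ i, bu i ≠ 0 := by
          intro i hi0
          have hmem' : i ∈ Finset.univ.filter (fun i => bu i = 0) := by simp [hi0]
          have := Finset.single_le_sum (f := α) (fun i _ => Nat.zero_le _) hmem'
          have := hα i
          omega
        by_cases hμ0 : μ = 0
        · -- derivative case
          have hβ0 : ∀ j, bv j = 0 → β j = 0 := by
            intro j hj
            have hmem' : j ∈ Finset.univ.filter (fun j => bv j = 0) := by simp [hj]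
            have := Finset.single_le_sum (f := β) (fun j _ => Nat.zero_le _) hmem'
            omega
          have hbvpow : ∀ (t : Finset (Fin L)), (∏ j ∈ t, bv j ^ β j) ≠ 0 := by
            intro t
            rw [Finset.prod_ne_zero_iff]
            intro j _ hj0
            rcases pow_eq_zero_iff'.mp hj0 with ⟨hbvj, hβj⟩
            exact hβj (hβ0 j hbvj)
          have hcastne : ∀ n : ℕ, ¬ p ∣ n → (n : Fld) ≠ 0 := by
            intro n hn h0
            exact hn ((CharP.cast_eq_zero_iff Fld p n).1 h0)
          rcases not_all_dvd p α β γ hf hpow with ⟨i₂, hi₂⟩ | ⟨j₂, hj₂⟩ | ⟨j₂, hj₂⟩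
          · -- use variable u i₂
            have hcl : coeff (Finsupp.single (vA (Sum.inl i₂)) 1) Aprod
                = ((eA (Sum.inl i₂) : ℕ) : Fld) * cA (Sum.inl i₂) ^ (eA (Sum.inl i₂) - 1) *
                  ∏ x ∈ Finset.univ.erase (Sum.inl i₂), cA x ^ eA x := by
              rw [hAprod, ← Finset.mul_prod_erase Finset.univ _ (Finset.mem_univ (Sum.inl i₂))]
              rw [coeff_single_one_binom_pow_mul _ _
                (not_mem_vars_binom_prod _ _ _ _
                  (fun x hx h => (Finset.mem_erase.1 hx).1 (hvA_inj h)))]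
              rw [constantCoeff_binom_prod]
            have hne : coeff (Finsupp.single (vA (Sum.inl i₂)) 1) Aprod ≠ 0 := by
              rw [hcl]
              refine mul_ne_zero (mul_ne_zero ?_ ?_) ?_
              · exact hcastne _ (by simpa [heA] using hi₂)
              · exact pow_ne_zero _ (by simpa [hcA] using hbune i₂)
              · rw [Finset.prod_ne_zero_iff]
                rintro (x | x) _ <;>
                  exact pow_ne_zero _ (by simp [hcA, hbune, hbw])
            have hcG : coeff (Finsupp.single (vA (Sum.inl i₂)) 1) G ≠ 0 := by
              rw [hcoeffG, coeff_eq_zero_of_not_mem_vars (hvarsV (Sum.inl i₂)) (by simp)]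
              simpa using hne
            have := hlow h1 hcG
            simp [mdeg_single] at this
            omega
          · -- use variable v j₂
            have hbvj₂ : bv j₂ ≠ 0 := by
              intro h0
              exact hj₂ (by rw [hβ0 j₂ h0]; exact Dvd.intro 0 rfl)
            have hcl : coeff (Finsupp.single ((Sum.inr (Sum.inl j₂)) : (Fin K ⊕ Fin L ⊕ Fin W)) 1) Vprod
                = ((β j₂ : ℕ) : Fld) * bv j₂ ^ (β j₂ - 1) *
                  ∏ j ∈ Finset.univ.erase j₂, bv j ^ β j := by
              rw [hVprod, ← Finset.mul_prod_erase Finset.univ _ (Finset.mem_univ j₂)]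
              rw [coeff_single_one_binom_pow_mul _ _
                (not_mem_vars_binom_prod _ _ _ _
                  (fun x hx h => (Finset.mem_erase.1 hx).1 (hvV_inj h)))]
              rw [constantCoeff_binom_prod]
            have hne : coeff (Finsupp.single ((Sum.inr (Sum.inl j₂)) : (Fin K ⊕ Fin L ⊕ Fin W)) 1) Vprod ≠ 0 := by
              rw [hcl]
              exact mul_ne_zero (mul_ne_zero (hcastne _ hj₂) (pow_ne_zero _ hbvj₂))
                (hbvpow _)
            have hcG : coeff (Finsupp.single ((Sum.inr (Sum.inl j₂)) : (Fin K ⊕ Fin L ⊕ Fin W)) 1) G ≠ 0 := by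
              rw [hcoeffG, coeff_eq_zero_of_not_mem_vars (hvarsA j₂) (by simp)]
              simpa using hne
            have := hlow h1 hcG
            simp [mdeg_single] at this
            omega
          · -- use variable w j₂
            have hcl : coeff (Finsupp.single (vA (Sum.inr j₂)) 1) Aprod
                = ((eA (Sum.inr j₂) : ℕ) : Fld) * cA (Sum.inr j₂) ^ (eA (Sum.inr j₂) - 1) *
                  ∏ x ∈ Finset.univ.erase (Sum.inr j₂), cA x ^ eA x := by
              rw [hAprod, ← Finset.mul_prod_erase Finset.univ _ (Finset.mem_univ (Sum.inr j₂))]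
              rw [coeff_single_one_binom_pow_mul _ _
                (not_mem_vars_binom_prod _ _ _ _
                  (fun x hx h => (Finset.mem_erase.1 hx).1 (hvA_inj h)))]
              rw [constantCoeff_binom_prod]
            have hne : coeff (Finsupp.single (vA (Sum.inr j₂)) 1) Aprod ≠ 0 := by
              rw [hcl]
              refine mul_ne_zero (mul_ne_zero ?_ ?_) ?_
              · exact hcastne _ (by simpa [heA] using hj₂)
              · exact pow_ne_zero _ (by simpa [hcA] using hbw j₂)
              · rw [Finset.prod_ne_zero_iff]
                rintro (x | x) _ <;>
                  exact pow_ne_zero _ (by simp [hcA, hbune, hbw])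
            have hcG : coeff (Finsupp.single (vA (Sum.inr j₂)) 1) G ≠ 0 := by
              rw [hcoeffG, coeff_eq_zero_of_not_mem_vars (hvarsV (Sum.inr j₂)) (by simp)]
              simpa using hne
            have := hlow h1 hcG
            simp [mdeg_single] at this
            omega
        · -- μ > 0: the constant coefficient of G is nonzero
          have hccVzero : constantCoeff Vprod = 0 := by
            obtain ⟨j₁, hj₁mem, hj₁⟩ := Finset.exists_ne_zero_of_sum_ne_zero hμ0
            rw [hccV]
            refine Finset.prod_eq_zero (Finset.mem_univ j₁) ?_
            rw [(Finset.mem_filter.1 hj₁mem).2]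
            exact zero_pow hj₁
          have hccAne : constantCoeff Aprod ≠ 0 := by
            rw [hccA]
            refine mul_ne_zero ?_ ?_
            · rw [Finset.prod_ne_zero_iff]
              intro i _
              refine pow_ne_zero _ ?_
              intro hi0
              have hmem' : i ∈ Finset.univ.filter (fun i => bu i = 0) := by simp [hi0]
              have := Finset.single_le_sum (f := α) (fun i _ => Nat.zero_le _) hmem'
              have := hα i
              omega
            · rw [Finset.prod_ne_zero_iff]
              intro j _
              exact pow_ne_zero _ (hbw j)
          have hcG : coeff 0 G ≠ 0 := by
            rw [hcoeffG]
            have e1 : coeff 0 Aprod = constantCoeff Aprod := rfl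
            have e2 : coeff 0 Vprod = constantCoeff Vprod := rfl
            rw [e1, e2, hccVzero, sub_zero]
            exact hccAne
          have := hlow h1 hcG
          simp at this
          omega
      · -- e1 ≠ 0 : the monomial MA has degree e1 < d and nonzero coefficient
        obtain ⟨i₂, hi₂mem, hi₂⟩ := Finset.exists_ne_zero_of_sum_ne_zero he1
        have hMAi₂ : MA (Sum.inl i₂) = α i₂ := by
          rw [hMA]
          exact sum_single_apply _ (fun i : Fin K => (Sum.inl i : (Fin K ⊕ Fin L ⊕ Fin W)))
            (fun a b h => by simpa using h) α hi₂mem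
        have hcV : coeff MA Vprod = 0 := by
          refine coeff_eq_zero_of_not_mem_vars (hvarsV (Sum.inl i₂)) ?_
          have : vA (Sum.inl i₂) = (Sum.inl i₂ : (Fin K ⊕ Fin L ⊕ Fin W)) := rfl
          rw [this, hMAi₂]
          exact hi₂
        have hcG : coeff MA G ≠ 0 := by
          rw [hcoeffG, hcV, sub_zero]
          exact hcoeffMA_A_ne
        have := hlow h1 hcG
        rw [hmdegMA] at this
        omega
    refine ⟨hbu, ?_⟩
    -- second claim: d ≤ μ
    by_contra hμ
    push_neg at hμ
    by_cases hμ0 : μ = 0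
    · -- constant coefficient of G nonzero
      have hccAzero : constantCoeff Aprod = 0 := by
        rw [hccA]
        refine mul_eq_zero_of_left ?_ _
        refine Finset.prod_eq_zero (Finset.mem_univ i₀) ?_
        rw [hbu i₀]
        exact zero_pow (by have := hα i₀; omega)
      have hccVne : constantCoeff Vprod ≠ 0 := by
        rw [hccV, Finset.prod_ne_zero_iff]
        intro j _ hj0
        rcases pow_eq_zero_iff'.mp hj0 with ⟨hbvj, hβj⟩
        have hmem' : j ∈ Finset.univ.filter (fun j => bv j = 0) := by simp [hbvj]
        have := Finset.single_le_sum (f := β) (fun j _ => Nat.zero_le _) hmem'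
        omega
      have hcG : coeff 0 G ≠ 0 := by
        rw [hcoeffG]
        have e1 : coeff 0 Aprod = constantCoeff Aprod := rfl
        have e2 : coeff 0 Vprod = constantCoeff Vprod := rfl
        rw [e1, e2, hccAzero, zero_sub]
        simpa using hccVne
      have := hlow h1 hcG
      simp at this
      omega
    · -- use the monomial MV of degree μ < d
      obtain ⟨j₁, hj₁mem, hj₁⟩ := Finset.exists_ne_zero_of_sum_ne_zero hμ0
      have hMVj₁ : MV (Sum.inr (Sum.inl j₁)) = β j₁ := by
        rw [hMV]
        exact sum_single_apply _ (fun j : Fin L => (Sum.inr (Sum.inl j) : (Fin K ⊕ Fin L ⊕ Fin W)))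
          hvV_inj β hj₁mem
      have hcA0 : coeff MV Aprod = 0 := by
        refine coeff_eq_zero_of_not_mem_vars (hvarsA j₁) ?_
        rw [hMVj₁]
        exact hj₁
      have hcG : coeff MV G ≠ 0 := by
        rw [hcoeffG, hcA0, zero_sub]
        simpa using hcoeffMV_V_ne
      have := hlow h1 hcG
      rw [hmdegMV] at this
      omega
  · -- backward: locus description implies membership data
    rintro ⟨hbu, hμ⟩
    constructor
    · rw [hmem d, hGeq]
      refine Submodule.sub_mem _ ?_ ?_
      · -- Aprod ∈ I0 ^ d
        rw [hAprod, Fintype.prod_sum_type]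
        have hU : (∏ i : Fin K, (X (vA (Sum.inl i)) + C (cA (Sum.inl i))) ^ eA (Sum.inl i))
            = ∏ i : Fin K, (X (Sum.inl i : (Fin K ⊕ Fin L ⊕ Fin W)) : MvPolynomial (Fin K ⊕ Fin L ⊕ Fin W) Fld) ^ α i := by
          refine Finset.prod_congr rfl fun i _ => ?_
          simp [hvA, hcA, heA, hbu i]
        rw [hU]
        have hUmem := prod_X_pow_mem (F := Fld) Finset.univ
          (fun i : Fin K => (Sum.inl i : (Fin K ⊕ Fin L ⊕ Fin W))) α
        rw [← hd] at hUmem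
        exact Ideal.mul_mem_right _ _ hUmem
      · -- Vprod ∈ I0 ^ d
        rw [hVprod, ← Finset.prod_filter_mul_prod_filter_not Finset.univ
          (fun j => bv j = 0)]
        have hV0 : (∏ j ∈ Finset.univ.filter (fun j => bv j = 0),
              ((X (Sum.inr (Sum.inl j) : (Fin K ⊕ Fin L ⊕ Fin W)) : MvPolynomial (Fin K ⊕ Fin L ⊕ Fin W) Fld) + C (bv j)) ^ β j)
            = ∏ j ∈ Finset.univ.filter (fun j => bv j = 0),
              (X (Sum.inr (Sum.inl j) : (Fin K ⊕ Fin L ⊕ Fin W)) : MvPolynomial (Fin K ⊕ Fin L ⊕ Fin W) Fld) ^ β j := by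
          refine Finset.prod_congr rfl fun j hj => ?_
          rw [(Finset.mem_filter.1 hj).2]
          simp
        rw [hV0]
        have hVmem := prod_X_pow_mem (F := Fld)
          (Finset.univ.filter (fun j => bv j = 0))
          (fun j : Fin L => (Sum.inr (Sum.inl j) : (Fin K ⊕ Fin L ⊕ Fin W))) β
        have hle : I0 ^ (∑ j ∈ Finset.univ.filter (fun j => bv j = 0), β j) ≤ I0 ^ d :=
          Ideal.pow_le_pow_right hμ
        exact Ideal.mul_mem_right _ _ (hle hVmem)
    · -- not in the (d+1)-st power
      rw [hmem (d + 1)]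
      intro hGd1
      have hMAeq : MA = ∑ i : Fin K, Finsupp.single (Sum.inl i : (Fin K ⊕ Fin L ⊕ Fin W)) (α i) := by
        rw [hMA]
        rw [Finset.filter_true_of_mem (fun i _ => hbu i)]
      have hMAi₀ : MA (Sum.inl i₀) = α i₀ := by
        rw [hMAeq]
        exact sum_single_apply Finset.univ (fun i : Fin K => (Sum.inl i : (Fin K ⊕ Fin L ⊕ Fin W)))
          (fun a b h => by simpa using h) α (Finset.mem_univ i₀)
      have hcV : coeff MA Vprod = 0 := by
        refine coeff_eq_zero_of_not_mem_vars (hvarsV (Sum.inl i₀)) ?_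
        have : vA (Sum.inl i₀) = (Sum.inl i₀ : (Fin K ⊕ Fin L ⊕ Fin W)) := rfl
        rw [this, hMAi₀]
        have := hα i₀
        omega
      have hcG : coeff MA G ≠ 0 := by
        rw [hcoeffG, hcV, sub_zero]
        exact hcoeffMA_A_ne
      have hc := hlow hGd1 hcG
      have hdeg : mdeg MA = d := by
        rw [hmdegMA, Finset.filter_true_of_mem (fun i _ => hbu i), hd]
      omega
end

section
/- If k is not a perfect field of characteristic p > 0, then there exists a maximal ideal m of k[x] (one variable) such that the homomorphism T_m from the completion of k[x]_m to F[[X]] is not an isomorphism. Concretely, for λ ∈ k not a p-th power, f(x) = x^p − λ is irreducible, and for m = (f), the induced map m_R/m_R² → (x−b)/(x−b)² is not an isomorphism, where b is the image of x in F = k[x]/(f). -/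
/-!
Since `λ` has no `p`-th root, `f = X ^ p - λ` is irreducible. Over `F = k[X]/(f)` it acquires the
root `b`, and Frobenius gives `f = X ^ p - b ^ p = (X - b) ^ p`, which lies in `(X - b) ^ 2` because
`p ≥ 2`. But `f ∉ (f) ^ 2 = (f ^ 2)`, so the class of `f` is a nonzero element of `k[X]/m²` killed by
the map to `F[X]/(X - b)²`.
-/

open Polynomial

theorem Ideal.notMem_span_singleton_sq {R : Type*} [CommRing R] [IsDomain R] {a : R}
    (ha : a ≠ 0) (hu : ¬IsUnit a) : a ∉ Ideal.span {a} ^ 2 := by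
  rw [Ideal.span_singleton_pow, Ideal.mem_span_singleton, ← pow_one a, ← pow_mul,
    pow_dvd_pow_iff ha hu]
  omega

theorem Ideal.quotientMap_not_injective {R S : Type*} [Ring R] [Ring S]
    {I : Ideal R} {J : Ideal S} [I.IsTwoSided] [J.IsTwoSided] {g : R →+* S}
    (h : I ≤ J.comap g) {x : R} (hx : x ∉ I) (hgx : g x ∈ J) :
    ¬Function.Injective (Ideal.quotientMap J g h) := fun hinj ↦
  hx <| Ideal.Quotient.eq_zero_iff_mem.mp <| hinj <| by
    rwa [Ideal.quotientMap_mk, map_zero, Ideal.Quotient.eq_zero_iff_mem]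

theorem Ideal.Quotient.mk_X_pow_eq_of_X_pow_sub_C_mem {R : Type*} [CommRing R]
    {I : Ideal R[X]} {n : ℕ} {r : R} (h : X ^ n - C r ∈ I) :
    Ideal.Quotient.mk I X ^ n = algebraMap R (R[X] ⧸ I) r := by
  rwa [← map_pow, ← Ideal.Quotient.mk_algebraMap, Polynomial.algebraMap_apply,
    Algebra.algebraMap_self_apply, Ideal.Quotient.mk_eq_mk_iff_sub_mem]

theorem Polynomial.map_X_pow_sub_C_eq_sub_pow {R S : Type*} [CommRing R] [CommRing S]
    (p : ℕ) [Fact p.Prime] [CharP S p] (g : R →+* S) {r : R} {b : S} (hb : b ^ p = g r) :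
    (X ^ p - C r).map g = (X - C b) ^ p := by
  rw [sub_pow_char, Polynomial.map_sub, Polynomial.map_pow, map_X, map_C, ← hb, C_pow]

/-- If `k` is a non-perfect field of characteristic `p > 0`, witnessed by
`λ ∈ k` with no `p`-th root, then `f = x^p - λ` is irreducible, and for the maximal ideal
`m = (f)`, the map `T_m` is not an isomorphism: concretely, with `F = k[x]/(f)` and `b`
the image of `x`, the induced map `k[x]/m² → F[x]/(x-b)²` (which on cotangent spaces is
`m_R/m_R² → (x-b)/(x-b)²`) is not bijective. -/
theorem not_perfect_completion_not_iso
    {k : Type*} [Field k] (p : ℕ) [Fact p.Prime] [CharP k p]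
    (lam : k) (hlam : ∀ y : k, y ^ p ≠ lam)
    (f : Polynomial k) (hf : f = Polynomial.X ^ p - Polynomial.C lam)
    (m : Ideal (Polynomial k)) (hm : m = Ideal.span {f})
    (b : Polynomial k ⧸ Ideal.span ({f} : Set (Polynomial k)))
    (hb : b = Ideal.Quotient.mk (Ideal.span {f}) Polynomial.X)
    (φ : Polynomial k →+* Polynomial (Polynomial k ⧸ Ideal.span ({f} : Set (Polynomial k))))
    (hφ : φ = Polynomial.mapRingHom
      (algebraMap k (Polynomial k ⧸ Ideal.span ({f} : Set (Polynomial k)))))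
    (J : Ideal (Polynomial (Polynomial k ⧸ Ideal.span ({f} : Set (Polynomial k)))))
    (hJ : J = Ideal.span {Polynomial.X - Polynomial.C b}) :
    Irreducible f ∧
    ∀ (h : m ^ 2 ≤ (J ^ 2).comap φ),
      ¬ Function.Bijective (@Ideal.quotientMap _ _ _ _ _ (J ^ 2) _
        ⟨fun c hc ↦ mul_comm c _ ▸ (J ^ 2).smul_mem _ hc⟩ φ h) := by
  have hirr : Irreducible f := hf ▸ X_pow_sub_C_irreducible_of_prime Fact.out hlam
  refine ⟨hirr, fun h hbij => ?_⟩
  subst hm hφ hJ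
  have : Nontrivial (k[X] ⧸ Ideal.span {f}) :=
    Ideal.Quotient.nontrivial_iff.mpr (Ideal.span_singleton_ne_top hirr.not_isUnit)
  have : CharP (k[X] ⧸ Ideal.span {f}) p :=
    charP_of_injective_algebraMap (algebraMap k _).injective p
  have hbp : b ^ p = algebraMap k _ lam :=
    hb ▸ Ideal.Quotient.mk_X_pow_eq_of_X_pow_sub_C_mem (hf ▸ Ideal.mem_span_singleton_self f)
  have hφf : mapRingHom (algebraMap k _) f ∈ Ideal.span {X - C b} ^ 2 := by
    rw [coe_mapRingHom, congrArg (map _) hf, map_X_pow_sub_C_eq_sub_pow p _ hbp]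
    exact Ideal.pow_le_pow_right (Fact.out : p.Prime).two_le
      (Ideal.pow_mem_pow (Ideal.mem_span_singleton_self _) p)
  -- instance search does not find this one, since it fails to see `k[X] ⧸ (f)` as a `CommRing`
  have : (Ideal.span {X - C b} ^ 2).IsTwoSided :=
    ⟨fun c hc ↦ mul_comm c _ ▸ Submodule.smul_mem _ _ hc⟩
  exact Ideal.quotientMap_not_injective h
    (Ideal.notMem_span_singleton_sq hirr.ne_zero hirr.not_isUnit) hφf hbij.injective
end

section
/- Let I ⊆ k[x₁,…,xₙ] be a binomial ideal (generated by binomials, with k[x]/I reduced, and satisfying: xᵢf ∈ I implies f ∈ I). Let X = V(I) ⊆ 𝔸ⁿ. Then X ∩ 𝕋ⁿ is Zariski dense in X, where 𝕋ⁿ = {x : all xᵢ ≠ 0}. -/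
/-!
Saturation of `I` with respect to every variable says exactly that the image of each `xᵢ`,
hence of `x₁⋯xₙ`, is a nonzerodivisor of `k[x]/I`. A nonzerodivisor `f` survives in the
localization at `f`, so the map `Spec R_f → Spec R`, whose image is the basic open set of `f`,
has kernel contained in the nilradical and therefore dense image.
-/

theorem Ideal.Quotient.mk_mem_nonZeroDivisors {R : Type*} [CommRing R] {I : Ideal R} {a : R}
    (h : ∀ f, a * f ∈ I → f ∈ I) : Ideal.Quotient.mk I a ∈ nonZeroDivisors (R ⧸ I) := by
  refine mem_nonZeroDivisors_iff_left.mpr fun x hx ↦ ?_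
  obtain ⟨f, rfl⟩ := Ideal.Quotient.mk_surjective x
  rw [← map_mul, Ideal.Quotient.eq_zero_iff_mem] at hx
  exact Ideal.Quotient.eq_zero_iff_mem.mpr (h f hx)

theorem PrimeSpectrum.dense_basicOpen_of_mem_nonZeroDivisors {R : Type*} [CommRing R] {f : R}
    (hf : f ∈ nonZeroDivisors R) : Dense (basicOpen f : Set (PrimeSpectrum R)) := by
  rw [← localization_away_comap_range (Localization.Away f) f]
  refine (denseRange_comap_iff_ker_le_nilRadical _).mpr ?_
  rw [(RingHom.injective_iff_ker_eq_bot _).mp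
    (IsLocalization.injective _ ((Submonoid.powers_le).mpr hf))]
  exact bot_le

theorem binomial_variety_torus_dense_general
    {k : Type*} [Field k] (n : ℕ) (I : Ideal (MvPolynomial (Fin n) k))
    (hsat : ∀ (f : MvPolynomial (Fin n) k) (i : Fin n), MvPolynomial.X i * f ∈ I → f ∈ I) :
    closure ((PrimeSpectrum.basicOpen
        (Ideal.Quotient.mk I (∏ i, MvPolynomial.X i)) :
        TopologicalSpace.Opens (PrimeSpectrum (MvPolynomial (Fin n) k ⧸ I))) :
        Set (PrimeSpectrum (MvPolynomial (Fin n) k ⧸ I)))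
      = Set.univ := by
  refine (PrimeSpectrum.dense_basicOpen_of_mem_nonZeroDivisors ?_).closure_eq
  rw [map_prod]
  exact prod_mem fun i _ ↦ Ideal.Quotient.mk_mem_nonZeroDivisors (hsat · i)

/-- For a binomial ideal `I ⊆ k[x₁,…,xₙ]` (generated by binomials, radical,
and saturated with respect to each variable), the torus part `X ∩ 𝕋ⁿ` is dense in
`X = V(I)`: the basic open set of `Spec k[x]/I` where `x₁⋯xₙ` is invertible is dense. -/
theorem binomial_variety_torus_dense
    {k : Type*} [Field k] (n : ℕ) (I : Ideal (MvPolynomial (Fin n) k))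
    (hbin : ∃ S : Set (MvPolynomial (Fin n) k),
      I = Ideal.span S ∧
      ∀ g ∈ S, ∃ α β : Fin n →₀ ℕ,
        g = MvPolynomial.monomial α 1 - MvPolynomial.monomial β 1)
    (hred : I.IsRadical)
    (hsat : ∀ (f : MvPolynomial (Fin n) k) (i : Fin n), MvPolynomial.X i * f ∈ I → f ∈ I) :
    closure ((PrimeSpectrum.basicOpen
        (Ideal.Quotient.mk I (∏ i, MvPolynomial.X i)) :
        TopologicalSpace.Opens (PrimeSpectrum (MvPolynomial (Fin n) k ⧸ I))) :
        Set (PrimeSpectrum (MvPolynomial (Fin n) k ⧸ I)))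
      = Set.univ :=
  binomial_variety_torus_dense_general n I hsat
end

section
/- Any non-increasing sequence of Hilbert–Samuel functions H₁ ≥ H₂ ≥ H₃ ≥ ⋯ , where each H_j is of the form H_j(l) = #{α ∈ ℕⁿ : α ∉ N_j, |α| ≤ l} for subsets N_j ⊆ ℕⁿ with N_j + ℕⁿ = N_j (n fixed), stabilizes: there exists J such that H_j = H_J for all j ≥ J. -/
/-!
Monomial ideals of `ℕⁿ`, i.e. upper sets ordered by reverse inclusion, are well-quasi-ordered.
Passing to complements, this is proved for lower sets by induction on `n`: a lower set of
`ℕ × α` is determined by its antitone sequence of slices, which is eventually constant from some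
index `K` on, so it is encoded by the word of its first `K` slices together with the limit slice,
and Higman's lemma makes these codes well-quasi-ordered. The Hilbert–Samuel function is monotone
in this order, so a non-increasing sequence `H_j` has a partially well-ordered range, hence a
monotone subsequence, which pins it down from that point on.
-/

theorem List.SublistForall₂.exists_rel_getElem {α β : Type*} {R : α → β → Prop} {l₁ : List α}
    {l₂ : List β} (h : List.SublistForall₂ R l₁ l₂) :
    ∀ i (hi : i < l₁.length), ∃ j, ∃ hj : j < l₂.length, i ≤ j ∧ R l₁[i] l₂[j] := by
  induction h with
  | nil => simp
  | cons hr _ ih =>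
    rintro (_ | i) hi
    · exact ⟨0, by simp, le_rfl, hr⟩
    · obtain ⟨j, hj, hij, hR⟩ := ih i (by simpa using hi)
      exact ⟨j + 1, by simpa using hj, by omega, hR⟩
  | cons_right _ ih =>
    intro i hi
    obtain ⟨j, hj, hij, hR⟩ := ih i hi
    exact ⟨j + 1, by simpa using hj, by omega, hR⟩

theorem wellQuasiOrdered_sublistForall₂ {β : Type*} [Preorder β] [WellQuasiOrderedLE β] :
    WellQuasiOrdered (List.SublistForall₂ (α := β) (· ≤ ·)) :=
  Set.partiallyWellOrderedOn_univ_iff.1 <|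
    ((Set.isPWO_of_wellQuasiOrderedLE Set.univ).partiallyWellOrderedOn_sublistForall₂ _).mono
      fun _ _ _ _ => Set.mem_univ _

theorem Set.IsPWO.exists_eq_of_antitone {β : Type*} [PartialOrder β] {b : ℕ → β}
    (h : (Set.range b).IsPWO) (hb : Antitone b) : ∃ J, ∀ j, J ≤ j → b j = b J := by
  obtain ⟨g, hg⟩ := h.exists_monotone_subseq (f := b) Set.mem_range_self
  refine ⟨g 0, fun j hj => le_antisymm (hb hj) ?_⟩
  calc b (g 0) ≤ b (g j) := hg (Nat.zero_le j)
    _ ≤ b j := hb (g.strictMono.id_le j)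

namespace LowerSet

variable {α : Type*} [Preorder α]

def slice (s : LowerSet (ℕ × α)) (k : ℕ) : LowerSet α where
  carrier := {a | (k, a) ∈ s}
  lower' _ _ hab ha := s.lower (Prod.mk_le_mk.2 ⟨le_rfl, hab⟩) ha

theorem antitone_slice (s : LowerSet (ℕ × α)) : Antitone s.slice :=
  fun _ _ hkk' _ ha => s.lower (Prod.mk_le_mk.2 ⟨hkk', le_rfl⟩) ha

theorem le_of_slice_le {s t : LowerSet (ℕ × α)} (h : ∀ k, s.slice k ≤ t.slice k) : s ≤ t :=
  fun x hx => h x.1 hx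

theorem le_of_sublistForall₂_slice {s t : LowerSet (ℕ × α)} {K K' : ℕ}
    (hK : ∀ k, K ≤ k → s.slice k = s.slice K) (hK' : ∀ k, K' ≤ k → t.slice k = t.slice K')
    (hhead : List.SublistForall₂ (· ≤ ·) ((List.range K).map s.slice)
      ((List.range K').map t.slice))
    (htail : s.slice K ≤ t.slice K') : s ≤ t := by
  refine le_of_slice_le fun k => ?_
  rcases lt_or_ge k K with hk | hk
  · obtain ⟨j, _, hkj, hle⟩ := hhead.exists_rel_getElem k (by simpa using hk)
    simp only [List.getElem_map, List.getElem_range] at hle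
    exact hle.trans (t.antitone_slice hkj)
  · calc s.slice k = s.slice K := hK k hk
      _ ≤ t.slice K' := htail
      _ = t.slice (max k K') := (hK' _ (le_max_right k K')).symm
      _ ≤ t.slice k := t.antitone_slice (le_max_left k K')

instance [WellQuasiOrderedLE (LowerSet α)] : WellQuasiOrderedLE (LowerSet (ℕ × α)) where
  wqo f := by
    choose K hK using fun m => WellFoundedLT.antitone_chain_condition (f m).antitone_slice
    obtain ⟨m, m', hmm', htail, hhead⟩ := wellQuasiOrdered_le.prod wellQuasiOrdered_sublistForall₂
      fun m => ((f m).slice (K m), (List.range (K m)).map (f m).slice)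
    exact ⟨m, m', hmm', le_of_sublistForall₂_slice (fun k hk => (hK m k hk).symm)
      (fun k hk => (hK m' k hk).symm) hhead htail⟩

instance wellQuasiOrderedLE_fin_nat : ∀ n, WellQuasiOrderedLE (LowerSet (Fin n → ℕ))
  | 0 => Finite.to_wellQuasiOrderedLE
  | n + 1 =>
    have := wellQuasiOrderedLE_fin_nat n
    (map (Fin.consOrderIso fun _ => ℕ)).wellQuasiOrderedLE_iff.1 inferInstance

instance wellQuasiOrderedLE_fin_finsupp (n : ℕ) : WellQuasiOrderedLE (LowerSet (Fin n →₀ ℕ)) :=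
  (map Finsupp.orderIsoFunOnFinite).wellQuasiOrderedLE_iff.2 inferInstance

end LowerSet

namespace UpperSet

instance wellQuasiOrderedLE_fin_finsupp (n : ℕ) : WellQuasiOrderedLE (UpperSet (Fin n →₀ ℕ)) :=
  upperSetIsoLowerSet.wellQuasiOrderedLE_iff.2 inferInstance

variable {σ : Type*}

noncomputable def hilbertSamuelFunction (N : UpperSet (σ →₀ ℕ)) (l : ℕ) : ℕ :=
  {α | α ∉ N ∧ α.degree ≤ l}.ncard

theorem monotone_hilbertSamuelFunction [Finite σ] :
    Monotone (hilbertSamuelFunction (σ := σ)) :=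
  fun _ _ hNN' l => Set.ncard_le_ncard
    (fun _ hα => ⟨fun h => hα.1 (coe_subset_coe.2 hNN' h), hα.2⟩)
    ((Finsupp.finite_of_degree_le l).subset fun _ hα => hα.2)

end UpperSet

theorem isUpperSet_of_add_eq_self {M : Type*} [AddMonoid M] [Preorder M] [CanonicallyOrderedAdd M]
    {N : Set M} (hN : {x | ∃ a ∈ N, ∃ b, x = a + b} = N) : IsUpperSet N := by
  intro a b hab ha
  obtain ⟨c, rfl⟩ := le_iff_exists_add.1 hab
  exact hN ▸ ⟨a, ha, c, rfl⟩

/-- Any non-increasing sequence of Hilbert–Samuel functions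
`H_j(l) = #{α ∈ ℕⁿ : α ∉ N_j, |α| ≤ l}`, where `N_j ⊆ ℕⁿ` satisfies `N_j + ℕⁿ = N_j`,
stabilizes. -/
theorem hilbertSamuel_sequence_stabilizes (n : ℕ) (N : ℕ → Set (Fin n →₀ ℕ))
    (hstab : ∀ j, {x | ∃ a ∈ N j, ∃ b : Fin n →₀ ℕ, x = a + b} = N j)
    (H : ℕ → ℕ → ℕ)
    (hH : ∀ j l, H j l = Set.ncard {α : Fin n →₀ ℕ | α ∉ N j ∧ (α.sum fun _ c => c) ≤ l})
    (hmono : ∀ j l, H (j + 1) l ≤ H j l) :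
    ∃ J : ℕ, ∀ j, J ≤ j → ∀ l, H j l = H J l := by
  let U : ℕ → UpperSet (Fin n →₀ ℕ) := fun j => ⟨N j, isUpperSet_of_add_eq_self (hstab j)⟩
  have hHU : H = UpperSet.hilbertSamuelFunction ∘ U := funext fun j => funext (hH j)
  have hpwo : (Set.range H).IsPWO := by
    rw [hHU, Set.range_comp]
    exact (Set.isPWO_of_wellQuasiOrderedLE _).image_of_monotone
      UpperSet.monotone_hilbertSamuelFunction
  obtain ⟨J, hJ⟩ := hpwo.exists_eq_of_antitone (antitone_nat_of_succ_le hmono)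
  exact ⟨J, fun j hj => congrFun (hJ j hj)⟩
end

section
/- Consider a cone Δ ⊆ {1,…,n} with γ ∈ ℤⁿ, d := |γ⁻|, satisfying the minimality conditions: γ⁻_Δ = d and 0 ≤ γ_Δ < γᵢ for all i ∈ Δ with γᵢ ≥ 0 (where γ_Δ = Σ_{i∈Δ} γᵢ). After the blow-up substitution in the chart indexed by i ∈ Δ (replace x_j by xᵢx_j for j ∈ Δ∖{i}) and division by xᵢ^d, the strict transform binomial x^{γ'⁺} − x^{γ'⁻} with γ'_j = γ_j for j ≠ i and γ'ᵢ = γ_Δ satisfies: if γᵢ < 0 then min(|γ'⁺|, |γ'⁻|) < d, and if γᵢ > 0 and min(|γ'⁺|,|γ'⁻|) = d then |γ'⁺| < |γ⁺|. -/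
/-- Key combinatorial step of resolution of toric hypersurfaces. Let
`γ ∈ ℤⁿ`, `d = |γ⁻| ≥ 1`, `|γ⁻| ≤ |γ⁺|`, and let `Δ ⊆ {1,…,n}` satisfy the minimality
conditions `γ⁻_Δ = d`, `0 ≤ γ_Δ`, and `γ_Δ < γᵢ` for all `i ∈ Δ` with `γᵢ ≥ 0`. For
`i ∈ Δ`, the strict transform exponent `γ'` (`γ'_j = γ_j` for `j ≠ i`, `γ'_i = γ_Δ`)
satisfies: if `γᵢ < 0` then `min(|γ'⁺|, |γ'⁻|) < d`; and if `γᵢ > 0` and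
`min(|γ'⁺|, |γ'⁻|) = d` then `|γ'⁺| < |γ⁺|`. -/
theorem toric_blowup_exponent_drop (n : ℕ) (γ : Fin n → ℤ) (Δ : Finset (Fin n)) (i : Fin n)
    (hle : (∑ j, max (-γ j) 0) ≤ ∑ j, max (γ j) 0)
    (hd : 1 ≤ ∑ j, max (-γ j) 0)
    (hΔd : ∑ j ∈ Δ, max (-γ j) 0 = ∑ j, max (-γ j) 0)
    (hΔ0 : 0 ≤ ∑ j ∈ Δ, γ j)
    (hΔmin : ∀ j ∈ Δ, 0 ≤ γ j → ∑ j' ∈ Δ, γ j' < γ j)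
    (hi : i ∈ Δ)
    (γ' : Fin n → ℤ)
    (hγ' : γ' = fun j => if j = i then ∑ j' ∈ Δ, γ j' else γ j) :
    (γ i < 0 →
      min (∑ j, max (γ' j) 0) (∑ j, max (-γ' j) 0) < ∑ j, max (-γ j) 0) ∧
    (0 < γ i →
      min (∑ j, max (γ' j) 0) (∑ j, max (-γ' j) 0) = ∑ j, max (-γ j) 0 →
      ∑ j, max (γ' j) 0 < ∑ j, max (γ j) 0) := by
  subst hγ'
  set S := ∑ j' ∈ Δ, γ j' with hS
  have key : ∀ f : ℤ → ℤ, ∑ j, f (if j = i then S else γ j)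
      = f S - f (γ i) + ∑ j, f (γ j) := by
    intro f
    rw [← Finset.sum_erase_add _ _ (Finset.mem_univ i),
        ← Finset.sum_erase_add Finset.univ (fun j => f (γ j)) (Finset.mem_univ i),
        Finset.sum_congr rfl (fun j hj => by rw [if_neg (Finset.ne_of_mem_erase hj)]),
        if_pos rfl]
    ring
  have hmaxS : max S 0 = S := max_eq_left hΔ0
  have hmaxnS : max (-S) 0 = 0 := max_eq_right (neg_nonpos.mpr hΔ0)
  have hneg := key (fun t => max (-t) 0)
  have hpos := key (fun t => max t 0)
  simp only [hmaxS, hmaxnS] at hneg hpos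
  constructor
  · intro h
    have h1 : max (-γ i) 0 = -γ i := max_eq_left (by omega)
    have : (∑ j, max (-(if j = i then S else γ j)) 0) < ∑ j, max (-γ j) 0 := by
      rw [hneg, h1]; omega
    exact lt_of_le_of_lt (min_le_right _ _) this
  · intro h _
    have h1 : max (γ i) 0 = γ i := max_eq_left h.le
    have h2 : S < γ i := hΔmin i hi h.le
    rw [hpos, h1]; omega
end

section
/- Combinatorial resolution for toric hypersurfaces: given γ ∈ ℤⁿ defining a linear function λ on ℤⁿ by λ(eᵢ) = γᵢ, define for each regular cone σ (given by a ℤ-basis of the lattice) d_σ = min(Σ_{λ(e)>0, e∈σ} λ(e), Σ_{λ(e)<0, e∈σ} (−λ(e))), and d(λ,Σ) = max over maximal cones σ ∈ Σ of d_σ. Then there exists a finite sequence of star-subdivisions Σ = Σ₀, Σ₁, …, Σ_t, each at the barycentre of a cone Δ with d_Δ = d(λ, Σ_j) minimal among its faces, such that d(λ, Σ_t) = 0. -/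
/-- `d_σ` for a cone `σ` (given by its finite set of vertices) and a linear functional `λ`:
`min(Σ_{λ(e)>0, e∈σ} λ(e), Σ_{λ(e)<0, e∈σ} (−λ(e)))`. -/
def coneD {n : ℕ} (l : (Fin n → ℤ) →ₗ[ℤ] ℤ) (σ : Finset (Fin n → ℤ)) : ℤ :=
  min (∑ v ∈ σ.filter (fun v => 0 < l v), l v)
      (∑ v ∈ σ.filter (fun v => l v < 0), -l v)

/-- A regular cone: its vertices extend to a ℤ-basis of the lattice `ℤⁿ`. -/
def IsRegularCone {n : ℕ} (σ : Finset (Fin n → ℤ)) : Prop :=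
  ∃ b : Module.Basis (Fin n) ℤ (Fin n → ℤ), (σ : Set (Fin n → ℤ)) ⊆ Set.range ⇑b

/-- The barycentre `e_Δ` of a cone `Δ`: the sum of its vertices. -/
def barycentre {n : ℕ} (Δ : Finset (Fin n → ℤ)) : Fin n → ℤ := ∑ v ∈ Δ, v

/-- The star-subdivision of a (simplicial, regular) fan at the barycentre of the cone `Δ`:
cones not containing `Δ` are kept, and each cone `τ ∪ Δ` containing `Δ` is replaced by the
cones `insert e_Δ τ` with `Δ ⊄ τ`. Fans are recorded by the vertex sets of their cones. -/
def starSubdivision {n : ℕ} (S : Set (Finset (Fin n → ℤ))) (Δ : Finset (Fin n → ℤ)) :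
    Set (Finset (Fin n → ℤ)) :=
  {σ ∈ S | ¬ Δ ⊆ σ} ∪
  {σ | ∃ τ : Finset (Fin n → ℤ), σ = insert (barycentre Δ) τ ∧ ¬ Δ ⊆ τ ∧ τ ∪ Δ ∈ S}

/-! Write `P_σ`, `N_σ` for the two sums, so that `d_σ = min P_σ N_σ` and `Ω_σ = max P_σ N_σ`.
Subdividing at a minimal admissible cone `Δ` with `d_Δ = D` replaces each cone `τ ∪ Δ`, `Δ ⊄ τ`,
by `τ ∪ {e_Δ}`. Since `λ(e_Δ) = P_Δ - N_Δ`, adding `e_Δ` to `τ` raises `P` by at most `P_Δ - D`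
and `N` by at most `N_Δ - D`, while removing `Δ ∖ τ` from `τ ∪ Δ` lowers them by `P_{Δ∖τ}` and
`N_{Δ∖τ}`; minimality of `Δ`, applied to its proper face `Δ ∩ τ`, turns this into a strict
lexicographic decrease of `(d, Ω)`. So every new cone lies below a removed one, the multiset of
the pairs `(d_σ, Ω_σ)` decreases in the (well-founded) Dershowitz–Manna order, and the process
stops only when `d = 0` everywhere. -/

lemma Finset.sum_insert_le_of_nonneg {ι M : Type*} [DecidableEq ι] [AddCommMonoid M]
    [PartialOrder M] [IsOrderedAddMonoid M] {f : ι → M} {a : ι} (s : Finset ι) (ha : 0 ≤ f a) :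
    ∑ x ∈ insert a s, f x ≤ ∑ x ∈ s, f x + f a := by
  by_cases has : a ∈ s
  · rw [Finset.insert_eq_of_mem has]; exact le_add_of_nonneg_right ha
  · rw [Finset.sum_insert has, add_comm]

lemma Finset.isDershowitzMannaLT_map_val {β α : Type*} [DecidableEq β] [Preorder α] (f : β → α)
    {K s t : Finset β} (hKs : K ⊆ s) (hKt : K ⊆ t) (hne : (s \ K).Nonempty)
    (hlt : ∀ y ∈ t \ K, ∃ x ∈ s \ K, f y < f x) :
    (t.val.map f).IsDershowitzMannaLT (s.val.map f) := by
  have hsplit {u : Finset β} (hKu : K ⊆ u) : u.val.map f = K.val.map f + (u \ K).val.map f := by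
    rw [← Multiset.map_add, Finset.sdiff_val, add_tsub_cancel_of_le (Finset.val_le_iff.mpr hKu)]
  refine ⟨K.val.map f, (t \ K).val.map f, (s \ K).val.map f, ?_, hsplit hKt, hsplit hKs, ?_⟩
  · rw [Multiset.empty_eq_zero, Ne, Multiset.map_eq_zero, Finset.val_eq_zero]
    exact hne.ne_empty
  · simp only [Multiset.mem_map, Finset.mem_val, forall_exists_index, and_imp]
    rintro _ y hy rfl
    obtain ⟨x, hx, hlt⟩ := hlt y hy
    exact ⟨f x, ⟨x, hx, rfl⟩, hlt⟩

lemma IsLowerSet.starSubdivision {n : ℕ} {S : Set (Finset (Fin n → ℤ))} (hS : IsLowerSet S)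
    (Δ : Finset (Fin n → ℤ)) : IsLowerSet (starSubdivision S Δ) := by
  rintro σ ρ hρ (⟨hσ, hΔσ⟩ | ⟨τ, rfl, hΔτ, hτΔ⟩)
  · exact Or.inl ⟨hS hρ hσ, fun h => hΔσ (h.trans hρ)⟩
  · have hρτ : ρ.erase (barycentre Δ) ⊆ τ := Finset.subset_insert_iff.mp hρ
    have hΔρ : ¬ Δ ⊆ ρ.erase (barycentre Δ) := fun h => hΔτ (h.trans hρτ)
    by_cases he : barycentre Δ ∈ ρ
    · exact Or.inr ⟨ρ.erase _, (Finset.insert_erase he).symm, hΔρ,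
        hS (Finset.union_subset_union_left hρτ) hτΔ⟩
    · rw [Finset.erase_eq_of_notMem he] at hρτ hΔρ
      exact Or.inl ⟨hS (hρτ.trans Finset.subset_union_left) hτΔ, hΔρ⟩

lemma Set.Finite.starSubdivision {n : ℕ} {S : Set (Finset (Fin n → ℤ))} (hS : S.Finite)
    (hlow : IsLowerSet S) (Δ : Finset (Fin n → ℤ)) : (starSubdivision S Δ).Finite :=
  (hS.union (hS.image (insert (barycentre Δ)))).subset <| by
    rintro σ (⟨hσ, -⟩ | ⟨τ, rfl, -, hτΔ⟩)
    · exact Or.inl hσ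
    · exact Or.inr ⟨τ, hlow Finset.subset_union_left hτΔ, rfl⟩

namespace ToricResolution

variable {n : ℕ} (l : (Fin n → ℤ) →ₗ[ℤ] ℤ)

def coneP (σ : Finset (Fin n → ℤ)) : ℤ := ∑ v ∈ σ.filter (fun v => 0 < l v), l v

def coneN (σ : Finset (Fin n → ℤ)) : ℤ := ∑ v ∈ σ.filter (fun v => l v < 0), -l v

def coneΩ (σ : Finset (Fin n → ℤ)) : ℤ := max (coneP l σ) (coneN l σ)

lemma coneD_eq_min (σ : Finset (Fin n → ℤ)) : coneD l σ = min (coneP l σ) (coneN l σ) := rfl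

lemma coneP_eq_sum_max (σ : Finset (Fin n → ℤ)) : coneP l σ = ∑ v ∈ σ, max (l v) 0 := by
  rw [coneP, Finset.sum_filter]
  exact Finset.sum_congr rfl fun v _ => by split_ifs <;> omega

lemma coneN_eq_sum_max (σ : Finset (Fin n → ℤ)) : coneN l σ = ∑ v ∈ σ, max (-l v) 0 := by
  rw [coneN, Finset.sum_filter]
  exact Finset.sum_congr rfl fun v _ => by split_ifs <;> omega

lemma coneP_nonneg (σ : Finset (Fin n → ℤ)) : 0 ≤ coneP l σ := by
  rw [coneP_eq_sum_max]; exact Finset.sum_nonneg fun _ _ => le_max_right _ _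

lemma coneN_nonneg (σ : Finset (Fin n → ℤ)) : 0 ≤ coneN l σ := by
  rw [coneN_eq_sum_max]; exact Finset.sum_nonneg fun _ _ => le_max_right _ _

lemma coneD_nonneg (σ : Finset (Fin n → ℤ)) : 0 ≤ coneD l σ :=
  le_min (coneP_nonneg l σ) (coneN_nonneg l σ)

lemma coneD_le_coneΩ (σ : Finset (Fin n → ℤ)) : coneD l σ ≤ coneΩ l σ :=
  min_le_max

lemma coneP_mono {σ τ : Finset (Fin n → ℤ)} (h : σ ⊆ τ) : coneP l σ ≤ coneP l τ := by
  simp only [coneP_eq_sum_max]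
  exact Finset.sum_le_sum_of_subset_of_nonneg h fun _ _ _ => le_max_right _ _

lemma coneN_mono {σ τ : Finset (Fin n → ℤ)} (h : σ ⊆ τ) : coneN l σ ≤ coneN l τ := by
  simp only [coneN_eq_sum_max]
  exact Finset.sum_le_sum_of_subset_of_nonneg h fun _ _ _ => le_max_right _ _

lemma coneD_mono {σ τ : Finset (Fin n → ℤ)} (h : σ ⊆ τ) : coneD l σ ≤ coneD l τ :=
  min_le_min (coneP_mono l h) (coneN_mono l h)

lemma coneP_inter_add_coneP_sdiff (σ τ : Finset (Fin n → ℤ)) :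
    coneP l (σ ∩ τ) + coneP l (σ \ τ) = coneP l σ := by
  simp only [coneP_eq_sum_max]; exact Finset.sum_inter_add_sum_sdiff σ τ _

lemma coneN_inter_add_coneN_sdiff (σ τ : Finset (Fin n → ℤ)) :
    coneN l (σ ∩ τ) + coneN l (σ \ τ) = coneN l σ := by
  simp only [coneN_eq_sum_max]; exact Finset.sum_inter_add_sum_sdiff σ τ _

lemma coneP_insert_le (v : Fin n → ℤ) (σ : Finset (Fin n → ℤ)) :
    coneP l (insert v σ) ≤ coneP l σ + max (l v) 0 := by
  simp only [coneP_eq_sum_max]; exact Finset.sum_insert_le_of_nonneg σ (le_max_right _ _)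

lemma coneN_insert_le (v : Fin n → ℤ) (σ : Finset (Fin n → ℤ)) :
    coneN l (insert v σ) ≤ coneN l σ + max (-l v) 0 := by
  simp only [coneN_eq_sum_max]; exact Finset.sum_insert_le_of_nonneg σ (le_max_right _ _)

lemma map_barycentre (Δ : Finset (Fin n → ℤ)) : l (barycentre Δ) = coneP l Δ - coneN l Δ := by
  rw [barycentre, map_sum, coneP_eq_sum_max, coneN_eq_sum_max, ← Finset.sum_sub_distrib]
  exact Finset.sum_congr rfl fun v _ => by omega

/-- `(p, q)`, `(r, s)`, `(a, b)` play the roles of `(P, N)` for `τ`, `Δ ∩ τ`, `Δ \ τ`, and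
`(x, y)` that of the new cone `insert e_Δ τ`. -/
lemma lex_lt_of_star_bounds {p q a b r s x y : ℤ} (ha : 0 ≤ a) (hb : 0 ≤ b) (hr : r ≤ p)
    (hs : s ≤ q) (hadm : min (p + a) (q + b) ≤ min (r + a) (s + b))
    (hmin : min r s < min (r + a) (s + b))
    (hx : x ≤ p + (r + a) - min (r + a) (s + b))
    (hy : y ≤ q + (s + b) - min (r + a) (s + b)) :
    min x y < min (p + a) (q + b) ∨
      min x y = min (p + a) (q + b) ∧ max x y < max (p + a) (q + b) := by
  omega

lemma coneD_lt_or_coneΩ_lt_of_star {Δ τ : Finset (Fin n → ℤ)}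
    (hmin : ∀ Δ₁ ⊂ Δ, coneD l Δ₁ < coneD l Δ) (hΔτ : ¬ Δ ⊆ τ)
    (hadm : coneD l (τ ∪ Δ) ≤ coneD l Δ) :
    coneD l (insert (barycentre Δ) τ) < coneD l (τ ∪ Δ) ∨
      coneD l (insert (barycentre Δ) τ) = coneD l (τ ∪ Δ) ∧
        coneΩ l (insert (barycentre Δ) τ) < coneΩ l (τ ∪ Δ) := by
  have hface : coneD l (Δ ∩ τ) < coneD l Δ :=
    hmin _ (Finset.ssubset_iff_subset_ne.mpr
      ⟨Finset.inter_subset_left, fun h => hΔτ (Finset.inter_eq_left.mp h)⟩)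
  have hPΔ := coneP_inter_add_coneP_sdiff l Δ τ
  have hNΔ := coneN_inter_add_coneN_sdiff l Δ τ
  have hPσ := coneP_inter_add_coneP_sdiff l (τ ∪ Δ) τ
  have hNσ := coneN_inter_add_coneN_sdiff l (τ ∪ Δ) τ
  rw [Finset.union_inter_cancel_left, Finset.union_sdiff_left] at hPσ hNσ
  have hx := coneP_insert_le l (barycentre Δ) τ
  have hy := coneN_insert_le l (barycentre Δ) τ
  rw [map_barycentre] at hx hy
  simp only [coneD_eq_min, coneΩ, ← hPσ, ← hNσ, ← hPΔ, ← hNΔ] at hface hadm hx hy ⊢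
  refine lex_lt_of_star_bounds (coneP_nonneg l _) (coneN_nonneg l _)
    (coneP_mono l Finset.inter_subset_right) (coneN_mono l Finset.inter_subset_right)
    hadm hface ?_ ?_ <;> omega

def rank (σ : Finset (Fin n → ℤ)) : ℕ ×ₗ ℕ := toLex ((coneD l σ).toNat, (coneΩ l σ).toNat)

lemma rank_insert_barycentre_lt {Δ τ : Finset (Fin n → ℤ)}
    (hmin : ∀ Δ₁ ⊂ Δ, coneD l Δ₁ < coneD l Δ) (hΔτ : ¬ Δ ⊆ τ)
    (hadm : coneD l (τ ∪ Δ) ≤ coneD l Δ) :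
    rank l (insert (barycentre Δ) τ) < rank l (τ ∪ Δ) := by
  have hlex := coneD_lt_or_coneΩ_lt_of_star l hmin hΔτ hadm
  have := coneD_nonneg l (insert (barycentre Δ) τ)
  have := coneD_le_coneΩ l (insert (barycentre Δ) τ)
  rw [rank, rank, Prod.Lex.toLex_lt_toLex]
  omega

lemma isDershowitzMannaLT_rank_starSubdivision {F F' : Finset (Finset (Fin n → ℤ))}
    {Δ : Finset (Fin n → ℤ)} (hΔ : Δ ∈ F) (hadm : ∀ σ ∈ F, coneD l σ ≤ coneD l Δ)
    (hmin : ∀ Δ₁ ⊂ Δ, coneD l Δ₁ < coneD l Δ) (hF' : (F' : Set _) = starSubdivision ↑F Δ) :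
    (F'.val.map (rank l)).IsDershowitzMannaLT (F.val.map (rank l)) := by
  have hmem {σ} : σ ∈ F' ↔ σ ∈ starSubdivision ↑F Δ := by rw [← hF', Finset.mem_coe]
  refine Finset.isDershowitzMannaLT_map_val (rank l) (K := F.filter (¬ Δ ⊆ ·))
    (Finset.filter_subset _ _) (fun σ hσ => hmem.mpr (Or.inl (Finset.mem_filter.mp hσ)))
    ⟨Δ, by simpa using hΔ⟩ ?_
  intro σ' hσ'
  obtain ⟨hσ', hσ'K⟩ := Finset.mem_sdiff.mp hσ'
  rcases hmem.mp hσ' with ⟨hσ'F, hΔσ'⟩ | ⟨τ, rfl, hΔτ, hτΔ⟩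
  · exact absurd (Finset.mem_filter.mpr ⟨hσ'F, hΔσ'⟩) hσ'K
  · exact ⟨τ ∪ Δ, by simpa using hτΔ, rank_insert_barycentre_lt l hmin hΔτ (hadm _ hτΔ)⟩

lemma exists_minimal_admissible {S : Set (Finset (Fin n → ℤ))} (hS : S.Finite)
    (hne : S.Nonempty) (hlow : IsLowerSet S) :
    ∃ Δ ∈ S, (∀ σ ∈ S, coneD l σ ≤ coneD l Δ) ∧ ∀ Δ₁ ⊂ Δ, coneD l Δ₁ < coneD l Δ := by
  obtain ⟨σ, hσ, hmax⟩ := Set.exists_max_image S (coneD l) hS hne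
  obtain ⟨Δ, hΔσ, hΔ⟩ :=
    exists_minimal_le_of_wellFoundedLT (fun Δ => coneD l σ ≤ coneD l Δ) σ le_rfl
  exact ⟨Δ, hlow hΔσ hσ, fun τ hτ => (hmax τ hτ).trans hΔ.prop,
    fun Δ₁ hΔ₁ => (not_le.mp (hΔ.not_prop_of_lt hΔ₁)).trans_le hΔ.prop⟩

def HasResolution (S : Set (Finset (Fin n → ℤ))) : Prop :=
  ∃ (t : ℕ) (F : ℕ → Set (Finset (Fin n → ℤ))),
    F 0 = S ∧
    (∀ j < t, ∃ Δ ∈ F j,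
      (∀ σ ∈ F j, coneD l σ ≤ coneD l Δ) ∧
      (∀ Δ₁ ⊂ Δ, coneD l Δ₁ < coneD l Δ) ∧
      F (j + 1) = starSubdivision (F j) Δ) ∧
    ∀ σ ∈ F t, coneD l σ = 0

lemma hasResolution_of_forall_coneD_eq_zero {S : Set (Finset (Fin n → ℤ))}
    (h : ∀ σ ∈ S, coneD l σ = 0) : HasResolution l S :=
  ⟨0, fun _ => S, rfl, fun _ hj => absurd hj (Nat.not_lt_zero _), h⟩

lemma HasResolution.of_starSubdivision {S : Set (Finset (Fin n → ℤ))} {Δ : Finset (Fin n → ℤ)}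
    (hΔ : Δ ∈ S) (hadm : ∀ σ ∈ S, coneD l σ ≤ coneD l Δ)
    (hmin : ∀ Δ₁ ⊂ Δ, coneD l Δ₁ < coneD l Δ) (h : HasResolution l (starSubdivision S Δ)) :
    HasResolution l S := by
  obtain ⟨t, F, hF0, hstep, hend⟩ := h
  refine ⟨t + 1, Nat.rec S fun j _ => F j, rfl, ?_, hend⟩
  rintro (_ | j) hj
  · exact ⟨Δ, hΔ, hadm, hmin, hF0⟩
  · exact hstep j (Nat.lt_of_succ_lt_succ hj)

theorem hasResolution_of_finite {S : Set (Finset (Fin n → ℤ))} (hS : S.Finite)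
    (hlow : IsLowerSet S) : HasResolution l S := by
  obtain ⟨F, rfl⟩ := hS.exists_finset_coe
  clear hS
  induction F using (InvImage.wf (fun F : Finset (Finset (Fin n → ℤ)) => F.val.map (rank l))
    Multiset.wellFounded_isDershowitzMannaLT).induction with
  | h F ih =>
  by_cases hzero : ∀ σ ∈ (F : Set _), coneD l σ = 0
  · exact hasResolution_of_forall_coneD_eq_zero l hzero
  obtain ⟨σ, hσ, -⟩ := not_forall₂.mp hzero
  obtain ⟨Δ, hΔ, hadm, hmin⟩ := exists_minimal_admissible l F.finite_toSet ⟨σ, hσ⟩ hlow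
  obtain ⟨F', hF'⟩ := (F.finite_toSet.starSubdivision hlow Δ).exists_finset_coe
  have hlt := isDershowitzMannaLT_rank_starSubdivision l hΔ hadm hmin hF'
  exact HasResolution.of_starSubdivision l hΔ hadm hmin
    (hF' ▸ ih F' hlt (hF' ▸ hlow.starSubdivision Δ))

end ToricResolution

theorem toric_hypersurface_combinatorial_resolution_general
    (n : ℕ) (l : (Fin n → ℤ) →ₗ[ℤ] ℤ) (S0 : Set (Finset (Fin n → ℤ)))
    (hfin : S0.Finite)
    (hfaces : ∀ σ ∈ S0, ∀ τ ⊆ σ, τ ∈ S0) :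
    ∃ (t : ℕ) (F : ℕ → Set (Finset (Fin n → ℤ))),
      F 0 = S0 ∧
      (∀ j < t, ∃ Δ ∈ F j,
        (∀ σ ∈ F j, coneD l σ ≤ coneD l Δ) ∧
        (∀ Δ₁ ⊂ Δ, coneD l Δ₁ < coneD l Δ) ∧
        F (j + 1) = starSubdivision (F j) Δ) ∧
      ∀ σ ∈ F t, coneD l σ = 0 :=
  ToricResolution.hasResolution_of_finite l hfin fun σ τ hτσ hσ => hfaces σ hσ τ hτσ

/-- Combinatorial resolution for toric hypersurfaces. For a regular fan `Σ₀`
in `ℤⁿ` (finite, closed under faces, all cones regular) and a linear function `λ`, there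
is a finite sequence of star-subdivisions `Σ₀, Σ₁, …, Σ_t`, each at the barycentre of a
cone `Δ` which is admissible (`d_Δ = d(λ, Σ_j)`, i.e. `d_Δ` is maximal among all cones)
and minimal (every proper face `Δ₁ ⊊ Δ` has `d_{Δ₁} < d_Δ`), such that `d(λ, Σ_t) = 0`
(i.e. `d_σ = 0` for every cone `σ` of `Σ_t`). -/
theorem toric_hypersurface_combinatorial_resolution
    (n : ℕ) (l : (Fin n → ℤ) →ₗ[ℤ] ℤ) (S0 : Set (Finset (Fin n → ℤ)))
    (hfin : S0.Finite)
    (hfaces : ∀ σ ∈ S0, ∀ τ ⊆ σ, τ ∈ S0)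
    (hreg : ∀ σ ∈ S0, IsRegularCone σ) :
    ∃ (t : ℕ) (F : ℕ → Set (Finset (Fin n → ℤ))),
      F 0 = S0 ∧
      (∀ j < t, ∃ Δ ∈ F j,
        (∀ σ ∈ F j, coneD l σ ≤ coneD l Δ) ∧
        (∀ Δ₁ ⊂ Δ, coneD l Δ₁ < coneD l Δ) ∧
        F (j + 1) = starSubdivision (F j) Δ) ∧
      ∀ σ ∈ F t, coneD l σ = 0 :=
  toric_hypersurface_combinatorial_resolution_general n l S0 hfin hfaces
end
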